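/- arXiv:1803.06583 — 12 statements merged into one kernel-verified Lean document; each statement's English description precedes it below -/
import Mathlib

section
/- Let X be a set with a circular order. Then the family B₁ consisting of all complements of closed intervals, B₁ = { X \ [a,b] : a, b ∈ X } ∪ { X }, is a base for a topology on X (the interval topology); i.e., B₁ satisfies Mathlib's `TopologicalSpace.IsTopologicalBasis` with respect to the topology it generates: B₁ covers X, and for any two members of B₁ and any point in their intersection there is a member of B₁ containing the point and contained in the intersection. -/
/-- The closed interval `[a,b]` of a circular order: the open interval
`(a,b) = {x | sbtw a x b}` together with the endpoints `a, b`. -/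
def cIcc {X : Type*} [CircularOrder X] (a b : X) : Set X :=
  {x | sbtw a x b} ∪ {a, b}

/-- The family `B₁` of all complements of closed intervals, together with `X` itself. -/
def B1 (X : Type*) [CircularOrder X] : Set (Set X) :=
  {s | ∃ a b : X, s = (cIcc a b)ᶜ} ∪ {Set.univ}

section Aux

variable {X : Type*} [CircularOrder X]

lemma mem_compl_cIcc' {a b y : X} :
    y ∈ (cIcc a b)ᶜ ↔ btw b y a ∧ y ≠ a ∧ y ≠ b := by
  have h : (¬ sbtw a y b) ↔ btw b y a := by
    rw [sbtw_iff_not_btw, not_not]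
  simp only [cIcc, Set.mem_compl_iff, Set.mem_union, Set.mem_setOf_eq,
    Set.mem_insert_iff, Set.mem_singleton_iff, not_or]
  tauto

/-- Transitivity of `btw` with basepoint `x`, provided the middle point is not `x`. -/
lemma btw_trans_x {x u v w : X} (hv : v ≠ x) (h1 : btw x u v) (h2 : btw x v w) :
    btw x u w := by
  rcases eq_or_ne u x with rfl | hu
  · exact btw_rfl_left
  rcases eq_or_ne w x with rfl | hw
  · exact btw_rfl_left_right
  rcases eq_or_ne u v with rfl | huv
  · exact h2
  rcases eq_or_ne v w with rfl | hvw
  · exact h1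
  rcases eq_or_ne u w with rfl | huw
  · exact btw_rfl_right
  have s1 : sbtw x u v := by
    refine h1.sbtw_of_not_btw fun h => ?_
    rcases h1.antisymm h with h' | h' | h' <;> simp_all
  have s2 : sbtw x v w := by
    refine h2.sbtw_of_not_btw fun h => ?_
    rcases h2.antisymm h with h' | h' | h' <;> simp_all
  exact (s1.trans_right s2).btw

lemma btw_total_x (x u v : X) : btw x u v ∨ btw x v u :=
  (btw_total x u v).imp id Btw.btw.cyclic_right

lemma btw_antisymm_x {x u v : X} (hu : u ≠ x) (hv : v ≠ x)
    (h1 : btw x u v) (h2 : btw x v u) : u = v := by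
  rcases h1.antisymm h2.cyclic_left with h | h | h
  · exact absurd h.symm hu
  · exact h
  · exact absurd h hv

/-- Membership in `cIcc a b` described in the linear order cut at a point `x`
outside of `cIcc a b`. -/
lemma mem_cIcc_iff_of_notMem {a b x z : X} (hx : x ∈ (cIcc a b)ᶜ) :
    z ∈ cIcc a b ↔ z ≠ x ∧ btw x a z ∧ btw x z b := by
  obtain ⟨hbxa, hxa, hxb⟩ := mem_compl_cIcc'.1 hx
  constructor
  · intro hz
    rcases hz with hs | hz
    · -- hs : sbtw a z b
      have hs : sbtw a z b := hs
      have hab : a ≠ b := by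
        rintro rfl; exact sbtw_irrefl_left_right hs
      have hzx : z ≠ x := by
        rintro rfl; exact hs.not_btw hbxa
      have sbxa : sbtw b x a := by
        refine hbxa.sbtw_of_not_btw fun h => ?_
        rcases h.antisymm hbxa with h' | h' | h' <;> simp_all
      have sxab : sbtw x a b := sbxa.cyclic_left
      refine ⟨hzx, ?_, (sxab.trans_left hs).btw⟩
      have sabx : sbtw a b x := sxab.cyclic_left
      exact (hs.trans_right sabx).cyclic_right.btw
    · rcases hz with rfl | rfl
      · exact ⟨hxa.symm, btw_rfl_right, hbxa.cyclic_left⟩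
      · exact ⟨hxb.symm, hbxa.cyclic_left, btw_rfl_right⟩
  · rintro ⟨hzx, h1, h2⟩
    rcases eq_or_ne z a with rfl | hza
    · exact Or.inr (Or.inl rfl)
    rcases eq_or_ne z b with rfl | hzb
    · exact Or.inr (Or.inr rfl)
    rcases eq_or_ne a b with rfl | hab
    · exact absurd (btw_antisymm_x hxa.symm hzx h1 h2) hza.symm
    have s1 : sbtw x a z := by
      refine h1.sbtw_of_not_btw fun h => ?_
      rcases h1.antisymm h with h' | h' | h' <;> simp_all
    have s2 : sbtw x z b := by
      refine h2.sbtw_of_not_btw fun h => ?_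
      rcases h2.antisymm h with h' | h' | h' <;> simp_all
    exact Or.inl ((s2.cyclic_left.trans_right s1.cyclic_left.cyclic_left).cyclic_left.cyclic_left)

lemma key {a b c d x : X} (h1 : x ∈ (cIcc a b)ᶜ) (h2 : x ∈ (cIcc c d)ᶜ) :
    ∃ e f : X, x ∈ (cIcc e f)ᶜ ∧ (cIcc e f)ᶜ ⊆ (cIcc a b)ᶜ ∩ (cIcc c d)ᶜ := by
  obtain ⟨hbxa, hxa, hxb⟩ := mem_compl_cIcc'.1 h1
  obtain ⟨hdxc, hxc, hxd⟩ := mem_compl_cIcc'.1 h2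
  classical
  refine ⟨if btw x a c then a else c, if btw x b d then d else b, ?_⟩
  set e := if btw x a c then a else c with he
  set f := if btw x b d then d else b with hf
  have hxe : x ≠ e := by rw [he]; split <;> assumption
  have hxf : x ≠ f := by rw [hf]; split <;> assumption
  have hea : btw x e a := by
    rw [he]; split
    · exact btw_rfl_right
    · exact ((btw_total_x x a c).resolve_left (by assumption))
  have hec : btw x e c := by
    rw [he]; split
    · assumption
    · exact btw_rfl_right
  have hbf : btw x b f := by
    rw [hf]; split
    · assumption
    · exact btw_rfl_right
  have hdf : btw x d f := by
    rw [hf]; split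
    · exact btw_rfl_right
    · exact ((btw_total_x x b d).resolve_left (by assumption))
  have hab : btw x a b := hbxa.cyclic_left
  have hcd : btw x c d := hdxc.cyclic_left
  have heb : btw x e b := btw_trans_x hxa.symm hea hab
  have hef : btw x e f := btw_trans_x hxb.symm heb hbf
  have hxef : x ∈ (cIcc e f)ᶜ :=
    mem_compl_cIcc'.2 ⟨hef.cyclic_right, hxe, hxf⟩
  have hsub1 : cIcc a b ⊆ cIcc e f := by
    intro z hz
    obtain ⟨hzx, hxaz, hxzb⟩ := (mem_cIcc_iff_of_notMem h1).1 hz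
    exact (mem_cIcc_iff_of_notMem hxef).2
      ⟨hzx, btw_trans_x hxa.symm hea hxaz, btw_trans_x hxb.symm hxzb hbf⟩
  have hsub2 : cIcc c d ⊆ cIcc e f := by
    intro z hz
    obtain ⟨hzx, hxcz, hxzd⟩ := (mem_cIcc_iff_of_notMem h2).1 hz
    exact (mem_cIcc_iff_of_notMem hxef).2
      ⟨hzx, btw_trans_x hxc.symm hec hxcz, btw_trans_x hxd.symm hxzd hdf⟩
  exact ⟨hxef, fun y hy => ⟨fun hmem => hy (hsub1 hmem), fun hmem => hy (hsub2 hmem)⟩⟩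

end Aux

/-- For every circular order on `X`, the family `B₁` of complements of closed intervals
(together with `X`) is a base for the topology it generates (the interval topology). -/
theorem stmt0 {X : Type*} [CircularOrder X] :
    @TopologicalSpace.IsTopologicalBasis X (TopologicalSpace.generateFrom (B1 X)) (B1 X) := by
  letI : TopologicalSpace X := TopologicalSpace.generateFrom (B1 X)
  refine ⟨?_, ?_, rfl⟩
  · rintro t₁ ht₁ t₂ ht₂ x hx
    simp only [B1, Set.mem_union, Set.mem_setOf_eq, Set.mem_singleton_iff] at ht₁ ht₂
    rcases ht₁ with ⟨a, b, rfl⟩ | rfl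
    · rcases ht₂ with ⟨c, d, rfl⟩ | rfl
      · obtain ⟨e, f, hxef, hsub⟩ := key hx.1 hx.2
        exact ⟨(cIcc e f)ᶜ, Or.inl ⟨e, f, rfl⟩, hxef, hsub⟩
      · exact ⟨(cIcc a b)ᶜ, Or.inl ⟨a, b, rfl⟩, hx.1,
          fun y hy => ⟨hy, trivial⟩⟩
    · refine ⟨t₂, ?_, hx.2, fun y hy => ⟨trivial, hy⟩⟩
      rcases ht₂ with ⟨c, d, rfl⟩ | rfl
      · exact Or.inl ⟨c, d, rfl⟩
      · exact Or.inr rfl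
  · apply Set.sUnion_eq_univ_iff.2
    intro x
    exact ⟨Set.univ, Or.inr rfl, trivial⟩
end

section
/- Let X be a set with a circular order, equipped with the interval topology. Then the circular order relation is jointly open: for every triple a,b,c with [a,b,c], there exist open neighborhoods U₁ of a, U₂ of b, and U₃ of c such that [a',b',c'] holds for every (a',b',c') ∈ U₁ × U₂ × U₃. -/
/-- The interval topology of a circular order: the topology generated by the
complements of closed intervals `X \ [a,b]`. -/
def intervalTop (X : Type*) [CircularOrder X] : TopologicalSpace X :=
  TopologicalSpace.generateFrom {s | ∃ a b : X, s = (cIcc a b)ᶜ}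

section Core
variable {α : Type*} [CircularOrder α]

lemma myne12 {a b c : α} (h : sbtw a b c) : a ≠ b := fun e => sbtw_irrefl_left (e ▸ h)
lemma myne23 {a b c : α} (h : sbtw a b c) : b ≠ c := myne12 h.cyclic_left
lemma myne13 {a b c : α} (h : sbtw a b c) : a ≠ c := (myne12 h.cyclic_right).symm

lemma mytot {a b c : α} (h1 : a ≠ b) (h2 : b ≠ c) (h3 : a ≠ c) :
    sbtw a b c ∨ sbtw c b a := by
  rcases btw_total a b c with h | h
  · left
    refine sbtw_of_btw_not_btw h (fun h' => ?_)
    rcases btw_antisymm h h' with e | e | e <;> simp_all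
  · right
    refine sbtw_of_btw_not_btw h (fun h' => ?_)
    rcases btw_antisymm h h' with e | e | e <;> simp_all

lemma myws {u v w : α} (h : btw u v w) (h1 : u ≠ v) (h2 : v ≠ w) (h3 : u ≠ w) :
    sbtw u v w := (mytot h1 h2 h3).resolve_right (not_sbtw_of_btw h)

/-- insertion in the middle -/
lemma mymid {u x v w : α} (h1 : sbtw u x v) (h2 : sbtw u v w) : sbtw x v w := by
  have hxw : x ≠ w := by
    rintro rfl
    exact h1.not_sbtw h2.cyclic_left
  rcases mytot (myne23 h1) (myne23 h2) hxw with h | h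
  · exact h
  · exfalso
    have t1 : sbtw v x w := h.cyclic_left
    have t2 : sbtw v w u := h2.cyclic_left
    have t3 : sbtw v x u := t1.trans_right t2
    exact (h1.cyclic_right).not_sbtw t3.cyclic_left

/-- shrink right end -/
lemma myins {x m c q : α} (h1 : sbtw x m c) (h2 : sbtw m q c) : sbtw x m q := by
  have hxq : x ≠ q := by
    rintro rfl
    exact h1.not_btw h2.cyclic_right.btw
  rcases mytot (myne12 h1) (myne12 h2) hxq with h | h
  · exact h
  · exfalso
    have t1 : sbtw m x q := h.cyclic_left
    have t2 : sbtw m x c := t1.trans_right h2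
    exact h1.not_btw (t2.cyclic_right.btw)

lemma mysplit {u m v x : α} (hm : sbtw u m v) (hx : sbtw u x v) :
    x = m ∨ sbtw u x m ∨ sbtw m x v := by
  by_cases hxm : x = m
  · exact Or.inl hxm
  by_cases h1 : sbtw u x m
  · exact Or.inr (Or.inl h1)
  right; right
  have d : sbtw m x u := (mytot (myne12 hx) hxm (myne12 hm)).resolve_left h1
  rcases mytot (Ne.symm hxm) (myne23 hx) (myne23 hm) with h | h
  · exact h
  · exfalso
    have t1 : sbtw x m v := h.cyclic_left
    have t2 : sbtw x v u := hx.cyclic_left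
    have t3 : sbtw x m u := t1.trans_right t2
    exact t3.not_sbtw d.cyclic_left.cyclic_left

/-- the main step lemma, carrying one gap's data. -/
lemma mystep {a b c r' p p' q x y : α}
    (habc : sbtw a b c)
    (hr'w : btw c r' a) (hr'a : r' ≠ a)
    (hpw : btw a p b) (hpa : p ≠ a)
    (hp'w : btw a p' b) (hp'b : p' ≠ b)
    (hlink : p = p' ∨ (p = b ∧ p' = a ∧ ∀ w, ¬ sbtw a w b))
    (hqw : btw b q c) (hqb : q ≠ b)
    (hx : sbtw r' x p) (hy : sbtw p' y q) : sbtw x y q := by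
  have hab := myne12 habc
  have hbc := myne23 habc
  have hac := myne13 habc
  have hr' : r' = c ∨ sbtw c r' a := by
    by_cases h : r' = c
    · exact Or.inl h
    · exact Or.inr (myws hr'w (fun e => h e.symm) hr'a (Ne.symm hac))
  have hq' : q = c ∨ sbtw b q c := by
    by_cases h : q = c
    · exact Or.inl h
    · exact Or.inr (myws hqw (Ne.symm hqb) h hbc)
  rcases hlink with rfl | ⟨h1, h2, hE⟩
  · -- linked case: p = p' is strictly inside (a,b)
    have hm : sbtw a p b := myws hpw (Ne.symm hpa) hp'b hab
    have hapc : sbtw a p c := hm.trans_right habc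
    have hcap : sbtw c a p := hapc.cyclic_right
    have hcx : sbtw c x p := by
      rcases hr' with hr1 | hr
      · rw [← hr1]; exact hx
      · exact (hr.trans_right hcap).trans_left hx
    rcases hq' with hq1 | hqs
    · rw [hq1]; rw [hq1] at hy; exact (hcx.cyclic_left).trans_left hy
    · have hpbc : sbtw p b c := mymid hm habc
      have hpqc : sbtw p q c := hpbc.trans_left hqs
      have hxpq : sbtw x p q := mymid hcx hpqc.cyclic_right
      exact hxpq.trans_left hy
  · -- empty gap case: p = b, p' = a
    rw [h1] at hx
    rw [h2] at hy
    have hr'ab : sbtw r' a b := by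
      rcases hr' with hr1 | hr
      · rw [hr1]; exact habc.cyclic_right
      · exact mymid hr habc.cyclic_right
    have habq : sbtw a b q := by
      rcases hq' with hq1 | hqs
      · rw [hq1]; exact habc
      · exact (hqs.trans_right habc.cyclic_left).cyclic_right
    have hxc : x = a ∨ sbtw r' x a := by
      rcases mysplit hr'ab hx with h | h | h
      · exact Or.inl h
      · exact Or.inr h
      · exact absurd h (hE x)
    have hyc : y = b ∨ sbtw b y q := by
      rcases mysplit habq hy with h | h | h
      · exact Or.inl h
      · exact absurd h (hE y)
      · exact Or.inr h
    rcases hxc with rfl | hxs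
    · rcases hyc with rfl | hys
      · exact habq
      · exact habq.trans_left hys
    · have hcxa : sbtw c x a := by
        rcases hr' with rfl | hr
        · exact hxs
        · exact hr.trans_left hxs
      have hxbc : sbtw x b c := (hcxa.cyclic_left).trans_left habc
      have hxbq : sbtw x b q := by
        rcases hq' with hq1 | hqs
        · rw [hq1]; exact hxbc
        · exact myins hxbc hqs
      rcases hyc with rfl | hys
      · exact hxbq
      · exact hxbq.trans_left hys

/-- membership of the centre point in its neighbourhood. -/
lemma mymem {a b c u v : α} (habc : sbtw a b c)
    (hu : btw c u a) (hua : u ≠ a) (hv : btw a v b) (hva : v ≠ a) : sbtw u a v := by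
  have hac := myne13 habc
  have hab := myne12 habc
  have hv' : v = b ∨ sbtw a v b := by
    by_cases h : v = b
    · exact Or.inl h
    · exact Or.inr (myws hv (Ne.symm hva) h hab)
  have hcav : sbtw c a v := by
    rcases hv' with hv1 | hs
    · rw [hv1]; exact habc.cyclic_right
    · exact (hs.trans_right habc).cyclic_right
  by_cases h : u = c
  · exact h ▸ hcav
  · exact mymid (myws hu (fun e => h e.symm) hua (Ne.symm hac)) hcav

/-- characterization of complements of closed intervals. -/
lemma mycompl {s t x : α} (hst : s ≠ t) : x ∈ (cIcc s t)ᶜ ↔ sbtw t x s := by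
  simp only [cIcc, Set.mem_compl_iff, Set.mem_union, Set.mem_setOf_eq, Set.mem_insert_iff,
    Set.mem_singleton_iff, not_or]
  constructor
  · rintro ⟨h1, h2, h3⟩
    exact (mytot (Ne.symm h3) h2 (Ne.symm hst)).resolve_right h1
  · intro h
    exact ⟨h.not_sbtw, myne23 h, (myne12 h).symm⟩

/-- choice of gap data. -/
lemma mygap {a b : α} (hab : a ≠ b) :
    ∃ p p' : α, btw a p b ∧ p ≠ a ∧ btw a p' b ∧ p' ≠ b ∧
      (p = p' ∨ (p = b ∧ p' = a ∧ ∀ w, ¬ sbtw a w b)) := by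
  by_cases h : ∃ w, sbtw a w b
  · obtain ⟨w, hw⟩ := h
    exact ⟨w, w, hw.btw, (myne12 hw).symm, hw.btw, myne23 hw, Or.inl rfl⟩
  · push_neg at h
    exact ⟨b, a, btw_rfl_right, hab.symm, btw_rfl_left, hab, Or.inr ⟨rfl, rfl, h⟩⟩

end Core

/-- In the interval topology of a circular order, the circular order relation is jointly
open: whenever `[a,b,c]`, there are open neighbourhoods `U₁, U₂, U₃` of `a, b, c` such that
`[a',b',c']` for all `(a',b',c') ∈ U₁ × U₂ × U₃`. -/
theorem stmt3 {X : Type*} [CircularOrder X] :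
    ∀ a b c : X, sbtw a b c →
      ∃ U₁ U₂ U₃ : Set X,
        @IsOpen X (intervalTop X) U₁ ∧ @IsOpen X (intervalTop X) U₂ ∧
        @IsOpen X (intervalTop X) U₃ ∧ a ∈ U₁ ∧ b ∈ U₂ ∧ c ∈ U₃ ∧
        ∀ a' ∈ U₁, ∀ b' ∈ U₂, ∀ c' ∈ U₃, sbtw a' b' c' := by
  intro a b c habc
  obtain ⟨p, p', hpw, hpa, hp'w, hp'b, hlab⟩ := mygap (myne12 habc)
  obtain ⟨q, q', hqw, hqb, hq'w, hq'c, hlbc⟩ := mygap (myne23 habc)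
  obtain ⟨r, r', hrw, hrc, hr'w, hr'a, hlca⟩ := mygap (Ne.symm (myne13 habc))
  have ha : sbtw r' a p := mymem habc hr'w hr'a hpw hpa
  have hb : sbtw p' b q := mymem habc.cyclic_left hp'w hp'b hqw hqb
  have hc : sbtw q' c r := mymem habc.cyclic_left.cyclic_left hq'w hq'c hrw hrc
  refine ⟨(cIcc p r')ᶜ, (cIcc q p')ᶜ, (cIcc r q')ᶜ,
    TopologicalSpace.GenerateOpen.basic _ ⟨p, r', rfl⟩,
    TopologicalSpace.GenerateOpen.basic _ ⟨q, p', rfl⟩,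
    TopologicalSpace.GenerateOpen.basic _ ⟨r, q', rfl⟩,
    (mycompl (myne13 ha).symm).mpr ha,
    (mycompl (myne13 hb).symm).mpr hb,
    (mycompl (myne13 hc).symm).mpr hc, ?_⟩
  intro x hx y hy z hz
  have hx' : sbtw r' x p := (mycompl (myne13 ha).symm).mp hx
  have hy' : sbtw p' y q := (mycompl (myne13 hb).symm).mp hy
  have hz' : sbtw q' z r := (mycompl (myne13 hc).symm).mp hz
  have hab := myne12 habc
  have hbc := myne23 habc
  have hac := myne13 habc
  have S1 : sbtw x y q := mystep habc hr'w hr'a hpw hpa hp'w hp'b hlab hqw hqb hx' hy'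
  -- dichotomies for the weak points
  have hp2 : p = b ∨ sbtw a p b := by
    by_cases h : p = b
    · exact Or.inl h
    · exact Or.inr (myws hpw (Ne.symm hpa) h hab)
  have hr2 : r = a ∨ sbtw c r a := by
    by_cases h : r = a
    · exact Or.inl h
    · exact Or.inr (myws hrw (Ne.symm hrc) h (Ne.symm hac))
  have habq : sbtw a b q := by
    by_cases h : q = c
    · exact h ▸ habc
    · exact (((myws hqw (Ne.symm hqb) h hbc).trans_right habc.cyclic_left)).cyclic_right
  have hapq : sbtw a p q := by
    rcases hp2 with hp1 | hps
    · rw [hp1]; exact habq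
    · exact hps.trans_right habq
  rcases hlbc with rfl | ⟨hq1, hq2, hEbc⟩
  · -- q = q' : q is strictly inside (b,c)
    have hqs : sbtw b q c := myws hqw (Ne.symm hqb) hq'c hbc
    -- hz' : sbtw q z r
    have T : sbtw x q z := by
      rcases hlca with rfl | ⟨hr1, hr2, hEca⟩
      · -- r = r', strictly inside (c,a);  hx' : sbtw r x p
        have hrs : sbtw c r a := myws hrw (Ne.symm hrc) hr'a (Ne.symm hac)
        have hrpc : sbtw r p c := by
          rcases hp2 with hp1 | hps
          · rw [hp1]; exact (hrs.cyclic_left).trans_left habc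
          · exact (hrs.cyclic_left).trans_left (hps.trans_right habc)
        have hpqc : sbtw p q c := by
          rcases hp2 with hp1 | hps
          · rw [hp1]; exact hqs
          · exact (mymid hps habc).trans_left hqs
        have hrpq : sbtw r p q := myins hrpc hpqc
        have hqrx : sbtw q r x := (hx'.trans_right hrpq).cyclic_right
        exact ((hz'.trans_right hqrx).cyclic_left).cyclic_left
      · -- r = a, r' = c, (c,a) empty; hx' : sbtw c x p, hz' : sbtw q z a
        rw [hr1] at hz'
        rw [hr2] at hx'
        have hcap : sbtw c a p := by
          rcases hp2 with hp1 | hps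
          · rw [hp1]; exact habc.cyclic_right
          · exact (hps.trans_right habc).cyclic_right
        rcases mysplit hcap hx' with rfl | h | hxs
        · exact hz'.cyclic_right
        · exact absurd h (hEca x)
        · have haxq : sbtw a x q := hxs.trans_right hapq
          exact ((hz'.trans_right haxq.cyclic_right).cyclic_left).cyclic_left
    exact S1.trans_right T
  · -- q = c, q' = b, (b,c) empty;  S1 : sbtw x y c, hz' : sbtw b z r
    rw [hq1] at S1
    rw [hq2] at hz'
    have hbcr : sbtw b c r := by
      rcases hr2 with hr1 | hrs
      · rw [hr1]; exact habc.cyclic_left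
      · exact ((hrs.trans_right habc.cyclic_right)).cyclic_right
    rcases mysplit hbcr hz' with rfl | h | hzs
    · exact S1
    · exact absurd h (hEbc z)
    · rcases hlca with rfl | ⟨hr1, hr2, hEca⟩
      · -- r = r' strict; hx' : sbtw r x p
        have hrs : sbtw c r a := myws hrw (Ne.symm hrc) hr'a (Ne.symm hac)
        have hrpc : sbtw r p c := by
          rcases hp2 with hp1 | hps
          · rw [hp1]; exact (hrs.cyclic_left).trans_left habc
          · exact (hrs.cyclic_left).trans_left (hps.trans_right habc)
        have hcrx : sbtw c r x := (hx'.trans_right hrpc).cyclic_right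
        exact S1.trans_right ((hzs.trans_right hcrx).cyclic_right)
      · -- r = a : hzs : sbtw c z a contradicts emptiness
        rw [hr1] at hzs
        exact absurd hzs (hEca z)
end

section
/- Let (I, ≤) be a directed partially ordered set, and for each i ∈ I let Xᵢ be a set with a circular order. Suppose given bonding maps f_{ij} : X_j → X_i for all i ≤ j which are c-order preserving and compatible (f_{ii} = id and f_{ij} ∘ f_{jk} = f_{ik} for i ≤ j ≤ k). Let X_∞ = { x ∈ ∏ᵢ Xᵢ : f_{ij}(x_j) = x_i for all i ≤ j } be the inverse limit. Define a ternary relation R on X_∞ by: [a,b,c] holds in X_∞ iff there exists i ∈ I with [aᵢ,bᵢ,cᵢ] in Xᵢ. Then R is a circular order on X_∞ (it satisfies cyclicity, asymmetry, transitivity, and totality), and each projection pᵢ : X_∞ → Xᵢ, pᵢ(a) = aᵢ, is c-order preserving. -/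
/-- The closed interval `[a,b]` with respect to a ternary relation `R`
(standing for the strict betweenness relation of a circular order). -/
def relCIcc {A : Type*} (R : A → A → A → Prop) (a b : A) : Set A :=
  {x | R a x b} ∪ {a, b}

/-- A map `f : A → B` is c-order preserving with respect to ternary relations `Ra`, `Rb`:
(1) if `[a,b,c]` holds in `A` and the images `f a, f b, f c` are distinct then
`[f a, f b, f c]` holds in `B`; (2) if `f a = f c` then `f` is constant on one of the
closed intervals `[a,c]`, `[c,a]`. -/
def COrderPres {A B : Type*} (Ra : A → A → A → Prop) (Rb : B → B → B → Prop)
    (f : A → B) : Prop :=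
  (∀ a b c : A, Ra a b c → f a ≠ f b → f b ≠ f c → f a ≠ f c → Rb (f a) (f b) (f c)) ∧
  (∀ a c : A, f a = f c →
    (∀ x ∈ relCIcc Ra a c, f x = f a) ∨ (∀ x ∈ relCIcc Ra c a, f x = f a))

lemma sbtw_ne₁₂ {α : Type*} [CircularOrder α] {a b c : α} (h : sbtw a b c) : a ≠ b := by
  rintro rfl; exact sbtw_irrefl_left h

lemma sbtw_ne₂₃ {α : Type*} [CircularOrder α] {a b c : α} (h : sbtw a b c) : b ≠ c := by
  rintro rfl; exact sbtw_irrefl_right h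

lemma sbtw_ne₁₃ {α : Type*} [CircularOrder α] {a b c : α} (h : sbtw a b c) : a ≠ c := by
  rintro rfl; exact sbtw_irrefl_left_right h

lemma sbtw_total {α : Type*} [CircularOrder α] {a b c : α}
    (hab : a ≠ b) (hbc : b ≠ c) (hac : a ≠ c) : sbtw a b c ∨ sbtw a c b := by
  rcases btw_total a b c with h | h
  · left
    refine h.sbtw_of_not_btw fun h' => ?_
    rcases btw_antisymm h h' with H | H | H
    · exact hab H
    · exact hbc H
    · exact hac H.symm
  · right
    refine ((h.sbtw_of_not_btw fun h' => ?_).cyclic_left).cyclic_left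
    rcases btw_antisymm h h' with H | H | H
    · exact hbc H.symm
    · exact hab H.symm
    · exact hac H

/-- A c-order preserving map reflects `sbtw` on images. -/
lemma COrderPres.reflect {A B : Type*} [CircularOrder A] [CircularOrder B] {f : A → B}
    (hf : COrderPres (fun a b c : A => sbtw a b c) (fun a b c : B => sbtw a b c) f)
    {x y z : A} (h : sbtw (f x) (f y) (f z)) : sbtw x y z := by
  have hxy : x ≠ y := fun e => sbtw_ne₁₂ h (by rw [e])
  have hyz : y ≠ z := fun e => sbtw_ne₂₃ h (by rw [e])
  have hxz : x ≠ z := fun e => sbtw_ne₁₃ h (by rw [e])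
  rcases sbtw_total hxy hyz hxz with h' | h'
  · exact h'
  · exact absurd (hf.1 x z y h' (sbtw_ne₁₃ h) (sbtw_ne₂₃ h).symm (sbtw_ne₁₂ h))
      (fun H => sbtw_asymm H h.cyclic_left)

/-- Inverse limits of circularly ordered sets along a directed poset, with c-order
preserving compatible bonding maps: the relation `R` on the inverse limit, defined by
`[a,b,c]` iff `[aᵢ,bᵢ,cᵢ]` for some `i`, is a circular order (cyclic, asymmetric,
transitive, total), and all projections are c-order preserving. -/
theorem stmt4 {I : Type*} [PartialOrder I] [IsDirected I (· ≤ ·)]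
    {X : I → Type*} [∀ i, CircularOrder (X i)]
    (f : ∀ i j : I, i ≤ j → X j → X i)
    (hcop : ∀ (i j : I) (h : i ≤ j),
      COrderPres (fun a b c : X j => sbtw a b c) (fun a b c : X i => sbtw a b c) (f i j h))
    (hid : ∀ (i : I) (h : i ≤ i) (x : X i), f i i h x = x)
    (hcomp : ∀ (i j k : I) (hij : i ≤ j) (hjk : j ≤ k) (x : X k),
      f i j hij (f j k hjk x) = f i k (hij.trans hjk) x) :
    let L := {x : ∀ i, X i // ∀ (i j : I) (h : i ≤ j), f i j h (x j) = x i}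
    let R : L → L → L → Prop := fun a b c => ∃ i : I, sbtw (a.1 i) (b.1 i) (c.1 i)
    (∀ a b c : L, R a b c → R b c a) ∧
    (∀ a b c : L, R a b c → ¬ R b a c) ∧
    (∀ a b c d : L, R a b c → R a c d → R a b d) ∧
    (∀ a b c : L, a ≠ b → b ≠ c → a ≠ c → R a b c ∨ R a c b) ∧
    (∀ i : I, COrderPres R (fun a b c : X i => sbtw a b c) (fun x : L => x.1 i)) := by
  intro L R
  -- lifting sbtw from level i to any k ≥ i
  have lift : ∀ (a b c : L) (i k : I) (h : i ≤ k),
      sbtw (a.1 i) (b.1 i) (c.1 i) → sbtw (a.1 k) (b.1 k) (c.1 k) := by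
    intro a b c i k h hs
    refine (hcop i k h).reflect ?_
    rwa [a.2 i k h, b.2 i k h, c.2 i k h]
  -- lifting equalities downward: if entries differ at i they differ at any k ≥ i
  have ne_lift : ∀ (a b : L) (i k : I) (h : i ≤ k), a.1 i ≠ b.1 i → a.1 k ≠ b.1 k := by
    intro a b i k h hne e
    exact hne (by rw [← a.2 i k h, ← b.2 i k h, e])
  refine ⟨?_, ?_, ?_, ?_, ?_⟩
  · rintro a b c ⟨i, h⟩
    exact ⟨i, h.cyclic_left⟩
  · rintro a b c ⟨i, h⟩ ⟨j, h'⟩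
    obtain ⟨k, hik, hjk⟩ := directed_of (· ≤ ·) i j
    exact sbtw_asymm (lift a b c i k hik h)
      ((lift b a c j k hjk h').cyclic_left.cyclic_left)
  · rintro a b c d ⟨i, h⟩ ⟨j, h'⟩
    obtain ⟨k, hik, hjk⟩ := directed_of (· ≤ ·) i j
    exact ⟨k, (lift a b c i k hik h).trans_right (lift a c d j k hjk h')⟩
  · intro a b c hab hbc hac
    have hab' : ∃ i, a.1 i ≠ b.1 i := by
      by_contra h; push_neg at h; exact hab (Subtype.ext (funext h))
    have hbc' : ∃ i, b.1 i ≠ c.1 i := by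
      by_contra h; push_neg at h; exact hbc (Subtype.ext (funext h))
    have hac' : ∃ i, a.1 i ≠ c.1 i := by
      by_contra h; push_neg at h; exact hac (Subtype.ext (funext h))
    obtain ⟨i, hi⟩ := hab'
    obtain ⟨j, hj⟩ := hbc'
    obtain ⟨l, hl⟩ := hac'
    obtain ⟨m, him, hjm⟩ := directed_of (· ≤ ·) i j
    obtain ⟨k, hmk, hlk⟩ := directed_of (· ≤ ·) m l
    rcases sbtw_total (ne_lift a b i k (him.trans hmk) hi)
      (ne_lift b c j k (hjm.trans hmk) hj) (ne_lift a c l k hlk hl) with h | h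
    · exact Or.inl ⟨k, h⟩
    · exact Or.inr ⟨k, h⟩
  · intro i
    constructor
    · rintro a b c ⟨j, h⟩ hab hbc hac
      obtain ⟨k, hik, hjk⟩ := directed_of (· ≤ ·) i j
      have hk := lift a b c j k hjk h
      have := (hcop i k hik).1 (a.1 k) (b.1 k) (c.1 k) hk
      rw [a.2 i k hik, b.2 i k hik, c.2 i k hik] at this
      exact this hab hbc hac
    · intro a c hac
      by_cases H : ∀ x ∈ relCIcc R a c, x.1 i = a.1 i
      · exact Or.inl H
      · right
        push_neg at H
        obtain ⟨x, hx, hxi⟩ := H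
        intro y hy
        by_contra hyi
        -- x is not a or c
        simp only [relCIcc, Set.mem_union, Set.mem_insert_iff, Set.mem_singleton_iff,
          Set.mem_setOf_eq] at hx hy
        have hac' : a.1 i = c.1 i := hac
        have hxR : R a x c := by
          rcases hx with hx | hx | hx
          · exact hx
          · exact absurd (by rw [hx]) hxi
          · exact absurd (by rw [hx, ← hac']) hxi
        have hyR : R c y a := by
          rcases hy with hy | hy | hy
          · exact hy
          · exact absurd (show y.1 i = a.1 i by rw [hy, hac']) hyi
          · exact absurd (show y.1 i = a.1 i by rw [hy]) hyi
        obtain ⟨j, hjx⟩ := hxR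
        obtain ⟨j', hjy⟩ := hyR
        obtain ⟨m, hjm, hj'm⟩ := directed_of (· ≤ ·) j j'
        obtain ⟨k, hmk, hik⟩ := directed_of (· ≤ ·) m i
        have hxk : sbtw (a.1 k) (x.1 k) (c.1 k) := lift a x c j k (hjm.trans hmk) hjx
        have hyk : sbtw (c.1 k) (y.1 k) (a.1 k) := lift c y a j' k (hj'm.trans hmk) hjy
        have hfac : f i k hik (a.1 k) = f i k hik (c.1 k) := by
          rw [a.2 i k hik, c.2 i k hik]; exact hac
        rcases (hcop i k hik).2 (a.1 k) (c.1 k) hfac with hC | hC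
        · have := hC (x.1 k) (Or.inl hxk)
          rw [x.2 i k hik, a.2 i k hik] at this
          exact hxi this
        · have := hC (y.1 k) (Or.inl hyk)
          rw [y.2 i k hik, a.2 i k hik] at this
          exact hyi this
end

section
/- Let (I, ≤) be a directed partially ordered set, and for each i ∈ I let Xᵢ be a nonempty set with a circular order, equipped with the compact interval topology of its circular order. Suppose given compatible bonding maps f_{ij} : X_j → X_i (i ≤ j) that are c-order preserving and continuous. Let X_∞ be the inverse limit with the inverse-limit topology (the subspace topology from the product ∏ᵢ Xᵢ), and let R be the circular order on X_∞ defined by: [a,b,c] iff [aᵢ,bᵢ,cᵢ] in Xᵢ for some i ∈ I. Then X_∞ is nonempty and compact, and the inverse-limit topology on X_∞ coincides with the interval topology of the circular order R. -/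
/-- The interval topology of a ternary relation `R` (a circular order): the topology
generated by the complements of closed intervals. -/
def relIntervalTop {A : Type*} (R : A → A → A → Prop) : TopologicalSpace A :=
  TopologicalSpace.generateFrom {s | ∃ a b : A, s = (relCIcc R a b)ᶜ}

/-- The interval topology of a circularly ordered set. -/
def cTop (X : Type*) [CircularOrder X] : TopologicalSpace X :=
  relIntervalTop (fun a b c : X => sbtw a b c)

open Topology

/-- Abstract axioms for a circular order given as a strict ternary relation. -/
structure CircRel {A : Type*} (R : A → A → A → Prop) : Prop where
  cyc : ∀ a b c, R a b c → R b c a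
  asym : ∀ a b c, R a b c → ¬ R b a c
  total : ∀ a b c, a ≠ b → b ≠ c → a ≠ c → R a b c ∨ R a c b
  trans : ∀ a b c d, R a b c → R a c d → R a b d

namespace CircRel

variable {A : Type*} {R : A → A → A → Prop} (hc : CircRel R)
include hc

theorem irrefl (a b : A) : ¬ R a b a :=
  fun h => hc.asym _ _ _ (hc.cyc _ _ _ h) h

theorem ne12 {a b c : A} (h : R a b c) : a ≠ b := by
  rintro rfl
  exact hc.irrefl _ _ (hc.cyc _ _ _ h)

theorem ne23 {a b c : A} (h : R a b c) : b ≠ c := hc.ne12 (hc.cyc _ _ _ h)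

theorem ne13 {a b c : A} (h : R a b c) : a ≠ c :=
  (hc.ne12 (hc.cyc _ _ _ (hc.cyc _ _ _ h))).symm

theorem not_rev {a b c : A} (h : R a b c) : ¬ R a c b :=
  fun h' => hc.asym _ _ _ h (hc.cyc _ _ _ (hc.cyc _ _ _ h'))

omit hc in
theorem mem_relCIcc {a b z : A} : z ∈ relCIcc R a b ↔ R a z b ∨ z = a ∨ z = b := by
  simp [relCIcc]; tauto

omit hc in
theorem not_mem_relCIcc {a b z : A} (h1 : ¬ R a z b) (h2 : z ≠ a) (h3 : z ≠ b) :
    z ∈ (relCIcc R a b)ᶜ := by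
  intro hz
  rcases mem_relCIcc.1 hz with h | h | h
  exacts [h1 h, h2 h, h3 h]

theorem compl_self (a : A) : (relCIcc R a a)ᶜ = {z | z ≠ a} := by
  ext z
  simp only [Set.mem_compl_iff, Set.mem_setOf_eq]
  constructor
  · intro h e; exact h (mem_relCIcc.2 (Or.inr (Or.inl e)))
  · intro h hz
    rcases mem_relCIcc.1 hz with h' | h' | h'
    exacts [hc.irrefl _ _ h', h h', h h']

theorem compl_ne {a b : A} (hab : a ≠ b) : (relCIcc R a b)ᶜ = {z | R b z a} := by
  ext z
  simp only [Set.mem_compl_iff, Set.mem_setOf_eq]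
  constructor
  · intro h
    have h1 : ¬ R a z b := fun h' => h (mem_relCIcc.2 (Or.inl h'))
    have h2 : z ≠ a := fun e => h (mem_relCIcc.2 (Or.inr (Or.inl e)))
    have h3 : z ≠ b := fun e => h (mem_relCIcc.2 (Or.inr (Or.inr e)))
    rcases hc.total b z a h3.symm h2 hab.symm with h' | h'
    · exact h'
    · exact absurd (hc.cyc _ _ _ h') h1
  · intro h hz
    rcases mem_relCIcc.1 hz with h' | h' | h'
    · exact hc.asym _ _ _ (hc.cyc _ _ _ h') h
    · exact hc.ne23 h h'
    · exact hc.ne12 h h'.symm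

omit hc in
theorem isOpen_basic (a b : A) : IsOpen[relIntervalTop R] ((relCIcc R a b)ᶜ) :=
  TopologicalSpace.isOpen_generateFrom_of_mem ⟨a, b, rfl⟩

/-- Separation helper: if the arc `(x,y)` is empty but `(y,x)` is not. -/
theorem sep_aux {x y : A} (hxy : x ≠ y) (hE : ∀ u, ¬ R x u y) {v : A} (hv : R y v x) :
    ∃ U V : Set A, IsOpen[relIntervalTop R] U ∧ IsOpen[relIntervalTop R] V ∧
      x ∈ U ∧ y ∈ V ∧ Disjoint U V := by
  refine ⟨(relCIcc R y v)ᶜ, (relCIcc R v x)ᶜ, isOpen_basic _ _, isOpen_basic _ _, ?_, ?_, ?_⟩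
  · exact not_mem_relCIcc (fun h' => hc.not_rev hv h') hxy (hc.ne23 hv).symm
  · exact not_mem_relCIcc (fun h' => hc.not_rev hv (hc.cyc _ _ _ h'))
      (hc.ne12 hv) hxy.symm
  · rw [Set.disjoint_left]
    intro z hz1 hz2
    have h1 : ¬ R y z v := fun h' => hz1 (mem_relCIcc.2 (Or.inl h'))
    have hzy : z ≠ y := fun e => hz1 (mem_relCIcc.2 (Or.inr (Or.inl e)))
    have hzv : z ≠ v := fun e => hz1 (mem_relCIcc.2 (Or.inr (Or.inr e)))
    have h2 : ¬ R v z x := fun h' => hz2 (mem_relCIcc.2 (Or.inl h'))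
    have hzx : z ≠ x := fun e => hz2 (mem_relCIcc.2 (Or.inr (Or.inr e)))
    -- totality on (x,z,y) : since (x,y) is empty we get R x y z
    have hxyz : R x y z := by
      rcases hc.total x z y hzx.symm hzy hxy with h' | h'
      · exact absurd h' (hE z)
      · exact h'
    -- totality on (y,z,v) gives R y v z
    have hyvz : R y v z := by
      rcases hc.total y z v hzy.symm hzv (hc.ne12 hv) with h' | h'
      · exact absurd h' h1
      · exact h'
    -- totality on (v,z,x) gives R v x z
    have hvxz : R v x z := by
      rcases hc.total v z x hzv.symm hzx (hc.ne23 hv) with h' | h'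
      · exact absurd h' h2
      · exact h'
    have hzxy : R z x y := hc.cyc _ _ _ (hc.cyc _ _ _ hxyz)
    have hzyv : R z y v := hc.cyc _ _ _ (hc.cyc _ _ _ hyvz)
    have hzxv : R z x v := hc.trans _ _ _ _ hzxy hzyv
    exact hc.asym _ _ _ (hc.cyc _ _ _ hvxz) hzxv

theorem t2 : @T2Space A (relIntervalTop R) := by
  letI := relIntervalTop R
  constructor
  intro x y hxy
  by_cases h1 : ∃ u, R x u y
  · by_cases h2 : ∃ v, R y v x
    · obtain ⟨u, hu⟩ := h1
      obtain ⟨v, hv⟩ := h2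
      refine ⟨(relCIcc R u v)ᶜ, (relCIcc R v u)ᶜ, isOpen_basic _ _, isOpen_basic _ _,
        ?_, ?_, ?_⟩
      · -- x ∈ : show R v x u
        have hxyv : R x y v := hc.cyc _ _ _ (hc.cyc _ _ _ hv)
        have hxuv : R x u v := hc.trans _ _ _ _ hu hxyv
        have hvxu : R v x u := hc.cyc _ _ _ (hc.cyc _ _ _ hxuv)
        exact not_mem_relCIcc (fun h' => hc.not_rev hvxu (hc.cyc _ _ _ (hc.cyc _ _ _ h')))
          (hc.ne23 hvxu) (hc.ne12 hvxu).symm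
      · -- y ∈ : show R u y v
        have hyxu : R y x u := hc.cyc _ _ _ (hc.cyc _ _ _ hu)
        have hyvu : R y v u := hc.trans _ _ _ _ hv hyxu
        have huyv : R u y v := hc.cyc _ _ _ (hc.cyc _ _ _ hyvu)
        exact not_mem_relCIcc (fun h' => hc.not_rev huyv (hc.cyc _ _ _ (hc.cyc _ _ _ h')))
          (hc.ne23 huyv) (hc.ne12 huyv).symm
      · rw [Set.disjoint_left]
        intro z hz1 hz2
        have huv : u ≠ v := by
          intro e; subst e
          exact hc.not_rev hu (hc.cyc _ _ _ (hc.cyc _ _ _ hv))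
        have ha : ¬ R u z v := fun h' => hz1 (mem_relCIcc.2 (Or.inl h'))
        have hzu : z ≠ u := fun e => hz1 (mem_relCIcc.2 (Or.inr (Or.inl e)))
        have hzv : z ≠ v := fun e => hz1 (mem_relCIcc.2 (Or.inr (Or.inr e)))
        have hb : ¬ R v z u := fun h' => hz2 (mem_relCIcc.2 (Or.inl h'))
        rcases hc.total u z v hzu.symm hzv huv with h' | h'
        · exact ha h'
        · exact hb (hc.cyc _ _ _ h')
    · push_neg at h2
      obtain ⟨u, hu⟩ := h1
      obtain ⟨U, V, hU, hV, hyU, hxV, hd⟩ := hc.sep_aux hxy.symm h2 hu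
      exact ⟨V, U, hV, hU, hxV, hyU, hd.symm⟩
  · push_neg at h1
    by_cases h2 : ∃ v, R y v x
    · obtain ⟨v, hv⟩ := h2
      exact hc.sep_aux hxy h1 hv
    · push_neg at h2
      refine ⟨(relCIcc R y y)ᶜ, (relCIcc R x x)ᶜ, isOpen_basic _ _, isOpen_basic _ _,
        ?_, ?_, ?_⟩
      · rw [hc.compl_self]; exact hxy
      · rw [hc.compl_self]; exact hxy.symm
      · rw [hc.compl_self, hc.compl_self, Set.disjoint_left]
        intro z hzy hzx
        rcases hc.total x z y hzx.symm hzy hxy with h' | h'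
        · exact h1 z h'
        · exact h2 z (hc.cyc _ _ _ h')

end CircRel

/-- A compact topology that refines a T2 topology equals it. -/
theorem topEq {α : Type*} (t1 t2 : TopologicalSpace α) (h12 : t1 ≤ t2)
    (hcpt : @CompactSpace α t1) (ht2 : @T2Space α t2) : t1 = t2 := by
  refine le_antisymm h12 ?_
  rw [TopologicalSpace.le_def]
  intro s hs
  have hid : Continuous[t1, t2] id := continuous_id_iff_le.mpr h12
  have hcm : @IsClosedMap α α t1 t2 id := @Continuous.isClosedMap α α t1 t2 hcpt ht2 id hid
  have h1 : IsClosed[t1] sᶜ := (@isClosed_compl_iff α t1 s).mpr hs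
  have h2 : IsClosed[t2] (id '' sᶜ) := hcm _ h1
  rw [Set.image_id] at h2
  exact (@isClosed_compl_iff α t2 s).mp h2


/-- Inverse limit of nonempty compact circularly ordered spaces (each carrying the interval
topology of its circular order) along a directed poset, with continuous c-order preserving
compatible bonding maps: the inverse limit is nonempty and compact in the inverse-limit
topology, and this topology coincides with the interval topology of the circular order `R`
defined by `[a,b,c]` iff `[aᵢ,bᵢ,cᵢ]` for some `i`. -/
theorem stmt5 {I : Type*} [PartialOrder I] [IsDirected I (· ≤ ·)]
    {X : I → Type*} [∀ i, CircularOrder (X i)] [∀ i, Nonempty (X i)]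
    (f : ∀ i j : I, i ≤ j → X j → X i)
    (hcop : ∀ (i j : I) (h : i ≤ j),
      COrderPres (fun a b c : X j => sbtw a b c) (fun a b c : X i => sbtw a b c) (f i j h))
    (hid : ∀ (i : I) (h : i ≤ i) (x : X i), f i i h x = x)
    (hcomp : ∀ (i j k : I) (hij : i ≤ j) (hjk : j ≤ k) (x : X k),
      f i j hij (f j k hjk x) = f i k (hij.trans hjk) x)
    (hcont : ∀ (i j : I) (h : i ≤ j), @Continuous _ _ (cTop (X j)) (cTop (X i)) (f i j h))
    (hcpt : ∀ i : I, @CompactSpace (X i) (cTop (X i))) :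
    letI : ∀ i, TopologicalSpace (X i) := fun i => cTop (X i)
    let L := {x : ∀ i, X i // ∀ (i j : I) (h : i ≤ j), f i j h (x j) = x i}
    let R : L → L → L → Prop := fun a b c => ∃ i : I, sbtw (a.1 i) (b.1 i) (c.1 i)
    Nonempty L ∧ CompactSpace L ∧ (inferInstance : TopologicalSpace L) = relIntervalTop R := by
  classical
  intro L R
  letI tX : ∀ i, TopologicalSpace (X i) := fun i => cTop (X i)
  have hcircX : ∀ i : I, CircRel (fun a b c : X i => sbtw a b c) := by
    intro i
    refine ⟨fun a b c h => sbtw_cyclic_left h,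
      fun a b c h h' => sbtw_asymm h (sbtw_cyclic_left (sbtw_cyclic_left h')), ?_,
      fun a b c d h1 h2 => sbtw_trans_right h1 h2⟩
    intro a b c hab hbc hac
    rcases btw_total a b c with h | h
    · left
      refine sbtw_of_btw_not_btw h fun h' => ?_
      rcases h.antisymm h' with e | e | e
      exacts [hab e, hbc e, hac e.symm]
    · right
      refine sbtw_of_btw_not_btw (btw_cyclic_left (btw_cyclic_left h)) fun h' => ?_
      rcases (btw_cyclic_left (btw_cyclic_left h)).antisymm h' with e | e | e
      exacts [hac e, hbc e.symm, hab e.symm]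
  haveI hT2 : ∀ i, T2Space (X i) := fun i => (hcircX i).t2
  haveI : ∀ i, CompactSpace (X i) := hcpt
  have liftNe : ∀ (a b : L) (i k : I) (hik : i ≤ k), a.1 i ≠ b.1 i → a.1 k ≠ b.1 k :=
    fun a b i k hik h e => h (by rw [← a.2 i k hik, ← b.2 i k hik, e])
  have push : ∀ (a b c : L) (i k : I) (hik : i ≤ k), sbtw (a.1 i) (b.1 i) (c.1 i) →
      sbtw (a.1 k) (b.1 k) (c.1 k) := by
    intro a b c i k hik h
    have hab := liftNe a b i k hik ((hcircX i).ne12 h)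
    have hbc := liftNe b c i k hik ((hcircX i).ne23 h)
    have hac := liftNe a c i k hik ((hcircX i).ne13 h)
    rcases (hcircX k).total _ _ _ hab hbc hac with h' | h'
    · exact h'
    · exfalso
      have h2 := (hcop i k hik).1 (a.1 k) (c.1 k) (b.1 k) h'
        (by rw [a.2 i k hik, c.2 i k hik]; exact (hcircX i).ne13 h)
        (by rw [c.2 i k hik, b.2 i k hik]; exact ((hcircX i).ne23 h).symm)
        (by rw [a.2 i k hik, b.2 i k hik]; exact (hcircX i).ne12 h)
      rw [a.2 i k hik, b.2 i k hik, c.2 i k hik] at h2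
      exact (hcircX i).not_rev h h2
  have nei : ∀ a b : L, a ≠ b → ∃ i, a.1 i ≠ b.1 i := by
    intro a b hab
    by_contra h
    push_neg at h
    exact hab (Subtype.ext (funext h))
  have hcircR : CircRel R := by
    constructor
    · rintro a b c ⟨i, hi⟩; exact ⟨i, sbtw_cyclic_left hi⟩
    · rintro a b c ⟨i, hi⟩ ⟨j, hj⟩
      obtain ⟨k, hik, hjk⟩ := directed_of (· ≤ ·) i j
      exact (hcircX k).asym _ _ _ (push a b c i k hik hi) (push b a c j k hjk hj)
    · intro a b c hab hbc hac
      obtain ⟨i1, h1⟩ := nei a b hab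
      obtain ⟨i2, h2⟩ := nei b c hbc
      obtain ⟨i3, h3⟩ := nei a c hac
      obtain ⟨k0, hk1, hk2⟩ := directed_of (· ≤ ·) i1 i2
      obtain ⟨k, hk0, hk3⟩ := directed_of (· ≤ ·) k0 i3
      rcases (hcircX k).total (a.1 k) (b.1 k) (c.1 k)
        (liftNe a b i1 k (hk1.trans hk0) h1) (liftNe b c i2 k (hk2.trans hk0) h2)
        (liftNe a c i3 k hk3 h3) with h | h
      · exact Or.inl ⟨k, h⟩
      · exact Or.inr ⟨k, h⟩
    · rintro a b c d ⟨i, hi⟩ ⟨j, hj⟩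
      obtain ⟨k, hik, hjk⟩ := directed_of (· ≤ ·) i j
      exact ⟨k, sbtw_trans_right (push a b c i k hik hi) (push a c d j k hjk hj)⟩
  have contEval : ∀ k : I, Continuous fun x : L => x.1 k :=
    fun k => (continuous_apply k).comp continuous_subtype_val
  have openX : ∀ (i : I) (u v : X i),
      IsOpen ((relCIcc (fun a b c : X i => sbtw a b c) u v)ᶜ) :=
    fun i u v => CircRel.isOpen_basic u v
  have mapdown : ∀ (a b : L) (i m : I) (him : i ≤ m) (z : X m), a.1 i ≠ b.1 i →
      sbtw (a.1 m) z (b.1 m) →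
      sbtw (a.1 i) (f i m him z) (b.1 i) ∨ f i m him z = a.1 i ∨ f i m him z = b.1 i := by
    intro a b i m him z hne hz
    by_cases e1 : f i m him z = a.1 i
    · exact Or.inr (Or.inl e1)
    by_cases e2 : f i m him z = b.1 i
    · exact Or.inr (Or.inr e2)
    left
    have h2 := (hcop i m him).1 (a.1 m) z (b.1 m) hz
      (by rw [a.2 i m him]; exact fun e => e1 e.symm)
      (by rw [b.2 i m him]; exact e2)
      (by rw [a.2 i m him, b.2 i m him]; exact hne)
    rwa [a.2 i m him, b.2 i m him] at h2
  have key1 : ∀ a b : L, IsOpen ((relCIcc R a b)ᶜ) := by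
    intro a b
    by_cases hab : a = b
    · subst hab
      rw [hcircR.compl_self]
      have he : {z : L | z ≠ a} = ⋃ k : I, (fun x : L => x.1 k) ⁻¹' {w | w ≠ a.1 k} := by
        ext z
        simp only [Set.mem_setOf_eq, Set.mem_iUnion, Set.mem_preimage]
        constructor
        · exact fun h => nei z a h
        · rintro ⟨k, hk⟩ e; exact hk (by rw [e])
      rw [he]
      refine isOpen_iUnion fun k => (contEval k).isOpen_preimage _ ?_
      have h := (hcircX k).compl_self (a.1 k)
      rw [← h]
      exact openX k _ _
    · rw [isOpen_iff_forall_mem_open]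
      intro x hxmem
      have hnR : ∀ i : I, ¬ sbtw (a.1 i) (x.1 i) (b.1 i) := by
        intro i hi
        exact hxmem (CircRel.mem_relCIcc.2 (Or.inl ⟨i, hi⟩))
      have hxa : x ≠ a := fun e => hxmem (CircRel.mem_relCIcc.2 (Or.inr (Or.inl e)))
      have hxb : x ≠ b := fun e => hxmem (CircRel.mem_relCIcc.2 (Or.inr (Or.inr e)))
      obtain ⟨i1, h1⟩ := nei x a hxa
      obtain ⟨i2, h2⟩ := nei x b hxb
      obtain ⟨i3, h3⟩ := nei a b hab
      obtain ⟨k0, hk1, hk2⟩ := directed_of (· ≤ ·) i1 i2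
      obtain ⟨k, hk0, hk3⟩ := directed_of (· ≤ ·) k0 i3
      have hxa' := liftNe x a i1 k (hk1.trans hk0) h1
      have hxb' := liftNe x b i2 k (hk2.trans hk0) h2
      have hab' := liftNe a b i3 k hk3 h3
      have hsb : sbtw (b.1 k) (x.1 k) (a.1 k) := by
        rcases (hcircX k).total (a.1 k) (x.1 k) (b.1 k) hxa'.symm hxb' hab' with h | h
        · exact absurd h (hnR k)
        · exact (hcircX k).cyc _ _ _ h
      refine ⟨(fun z : L => z.1 k) ⁻¹' {w | sbtw (b.1 k) w (a.1 k)}, ?_, ?_, hsb⟩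
      · intro y hy hymem
        have hy' : sbtw (b.1 k) (y.1 k) (a.1 k) := hy
        rcases CircRel.mem_relCIcc.1 hymem with hR | e | e
        · obtain ⟨i, hi⟩ := hR
          obtain ⟨m, him, hkm⟩ := directed_of (· ≤ ·) i k
          have haibi : a.1 i ≠ b.1 i := (hcircX i).ne13 hi
          have hyma : y.1 m ≠ a.1 m := fun e => (hcircX i).ne12 hi
            (Eq.symm (show y.1 i = a.1 i by rw [← y.2 i m him, ← a.2 i m him, e]))
          have hymb : y.1 m ≠ b.1 m := fun e => (hcircX i).ne23 hi
            (show y.1 i = b.1 i by rw [← y.2 i m him, ← b.2 i m him, e])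
          have habm : a.1 m ≠ b.1 m := liftNe a b i m him haibi
          rcases (hcircX m).total (a.1 m) (y.1 m) (b.1 m) hyma.symm hymb habm with hm | hm
          · have hk' := mapdown a b k m hkm (y.1 m) hab' hm
            rw [y.2 k m hkm] at hk'
            rcases hk' with h' | h' | h'
            · exact (hcircX k).asym _ _ _ ((hcircX k).cyc _ _ _ h') hy'
            · exact ((hcircX k).ne23 hy') h'
            · exact ((hcircX k).ne12 hy').symm h'
          · have hm' : sbtw (b.1 m) (y.1 m) (a.1 m) := (hcircX m).cyc _ _ _ hm
            have hk' := mapdown b a i m him (y.1 m) haibi.symm hm'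
            rw [y.2 i m him] at hk'
            rcases hk' with h' | h' | h'
            · exact (hcircX i).asym _ _ _ ((hcircX i).cyc _ _ _ h') hi
            · exact ((hcircX i).ne23 hi) h'
            · exact ((hcircX i).ne12 hi).symm h'
        · exact ((hcircX k).ne23 hy') (by rw [e])
        · exact ((hcircX k).ne12 hy').symm (by rw [e])
      · have h := (hcircX k).compl_ne hab'
        exact (contEval k).isOpen_preimage _ (h ▸ openX k (a.1 k) (b.1 k))
  have le1 : (inferInstance : TopologicalSpace L) ≤ relIntervalTop R := by
    refine le_generateFrom ?_
    rintro s ⟨a, b, rfl⟩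
    exact key1 a b
  have hLset : IsClosed {x : ∀ i, X i | ∀ (i j : I) (h : i ≤ j), f i j h (x j) = x i} := by
    have he : {x : ∀ i, X i | ∀ (i j : I) (h : i ≤ j), f i j h (x j) = x i} =
        ⋂ (i : I) (j : I) (h : i ≤ j), {x : ∀ i, X i | f i j h (x j) = x i} := by
      ext x; simp [Set.mem_iInter]
    rw [he]
    exact isClosed_iInter fun i => isClosed_iInter fun j => isClosed_iInter fun h =>
      isClosed_eq ((hcont i j h).comp (continuous_apply j)) (continuous_apply i)
  haveI hLcpt : CompactSpace L := isCompact_iff_compactSpace.mp hLset.isCompact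
  have hne : Nonempty L := by
    rcases isEmpty_or_nonempty I with hI | hI
    · exact ⟨⟨fun i => Classical.arbitrary _, fun i => isEmptyElim i⟩⟩
    · set T : I → Set (∀ i, X i) := fun j => {x | ∀ (i : I) (h : i ≤ j), f i j h (x j) = x i}
        with hT
      have hTne : ∀ j, (T j).Nonempty := by
        intro j
        refine ⟨fun i => if h : i ≤ j then f i j h (Classical.arbitrary (X j))
          else Classical.arbitrary _, ?_⟩
        intro i h
        simp only [hT, Set.mem_setOf_eq]
        rw [dif_pos (le_refl j), dif_pos h, hid]
      have hTcl : ∀ j, IsClosed (T j) := by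
        intro j
        have he : T j = ⋂ (i : I) (h : i ≤ j), {x : ∀ i, X i | f i j h (x j) = x i} := by
          ext x; simp [hT, Set.mem_iInter]
        rw [he]
        exact isClosed_iInter fun i => isClosed_iInter fun h =>
          isClosed_eq ((hcont i j h).comp (continuous_apply j)) (continuous_apply i)
      have hTc : ∀ j, IsCompact (T j) := fun j => (hTcl j).isCompact
      have hTd : Directed (· ⊇ ·) T := by
        intro j k
        obtain ⟨l, hjl, hkl⟩ := directed_of (· ≤ ·) j k
        refine ⟨l, ?_, ?_⟩
        · intro x hx i h
          rw [← hx j hjl, hcomp i j l h hjl]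
          exact hx i (h.trans hjl)
        · intro x hx i h
          rw [← hx k hkl, hcomp i k l h hkl]
          exact hx i (h.trans hkl)
      obtain ⟨x, hx⟩ := IsCompact.nonempty_iInter_of_directed_nonempty_isCompact_isClosed
        T hTd hTne hTc hTcl
      exact ⟨⟨x, fun i j h => (Set.mem_iInter.1 hx j) i h⟩⟩
  exact ⟨hne, hLcpt, topEq _ _ le1 hLcpt hcircR.t2⟩
end

section
/- Let G be a topological group acting continuously (jointly in both variables) on a compact Hausdorff space X whose topology is the interval topology of a circular order on X. Let D ⊆ G be a dense subset such that every d ∈ D preserves the circular order (i.e., [x,y,z] implies [dx,dy,dz] for all x,y,z ∈ X). Then every g ∈ G preserves the circular order. -/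
section CircAux

variable {α : Type*} [CircularOrder α] {a b c d w x y z : α}

private theorem sbtw_ne12 (h : sbtw a b c) : a ≠ b :=
  fun e => sbtw_irrefl_left (e ▸ h)

private theorem sbtw_ne23 (h : sbtw a b c) : b ≠ c :=
  sbtw_ne12 h.cyclic_left

private theorem sbtw_ne13 (h : sbtw a b c) : a ≠ c :=
  fun e => sbtw_irrefl_left_right (e ▸ h)

private theorem sbtwL1 (h1 : sbtw a b c) (h2 : sbtw a d b) : sbtw d b c :=
  (sbtw_trans_right h1.cyclic_left h2.cyclic_left.cyclic_left).cyclic_left.cyclic_left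

private theorem sbtwL2 (h1 : sbtw w x y) (h2 : sbtw w y z) : sbtw x y z :=
  (sbtw_trans_right h2.cyclic_left h1.cyclic_left.cyclic_left).cyclic_left.cyclic_left

private theorem sbtwL3 (h1 : sbtw a b c) (h2 : sbtw b d c) : sbtw a b d :=
  (sbtw_trans_left h2.cyclic_left h1.cyclic_right).cyclic_left

private theorem sbtw_total3 (hab : a ≠ b) (hbc : b ≠ c) (hca : c ≠ a) :
    sbtw a b c ∨ sbtw a c b := by
  rcases btw_total a b c with h | h
  · by_cases h' : btw c b a
    · rcases btw_antisymm h h' with e | e | e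
      · exact absurd e hab
      · exact absurd e hbc
      · exact absurd e hca
    · exact Or.inl (h.sbtw_of_not_btw h')
  · by_cases h' : btw a b c
    · rcases btw_antisymm h' h with e | e | e
      · exact absurd e hab
      · exact absurd e hbc
      · exact absurd e hca
    · exact Or.inr ((h.sbtw_of_not_btw h').cyclic_left.cyclic_left)

/-- A "cut" between `a` and `b`: either a midpoint, or the gap `(a,b)` is empty. -/
def CCut (a b s t : α) : Prop :=
  (s = t ∧ sbtw a s b) ∨ (s = b ∧ t = a ∧ ∀ m, ¬ sbtw a m b)

private theorem ccut_exists (a b : α) : ∃ s t, CCut a b s t := by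
  by_cases h : ∃ m, sbtw a m b
  · obtain ⟨m, hm⟩ := h; exact ⟨m, m, Or.inl ⟨rfl, hm⟩⟩
  · exact ⟨b, a, Or.inr ⟨rfl, rfl, fun m hm => h ⟨m, hm⟩⟩⟩

private theorem step1 {s₁ t₁ : α} (habc : sbtw a b c) (c1 : CCut a b s₁ t₁) :
    sbtw c a s₁ := by
  rcases c1 with ⟨_, hm⟩ | ⟨e, _, _⟩
  · exact (sbtw_trans_right hm habc).cyclic_right
  · rw [e]; exact habc.cyclic_right

private theorem mem_step {s₁ t₁ s₃ t₃ : α} (habc : sbtw a b c)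
    (c1 : CCut a b s₁ t₁) (c3 : CCut c a s₃ t₃) : sbtw t₃ a s₁ := by
  have S1 := step1 habc c1
  rcases c3 with ⟨e, hm⟩ | ⟨_, e, _⟩
  · exact sbtwL2 (e ▸ hm) S1
  · rw [e]; exact S1

private theorem step {s₁ t₁ s₂ t₂ s₃ t₃ : α} (habc : sbtw a b c)
    (c1 : CCut a b s₁ t₁) (c2 : CCut b c s₂ t₂) (c3 : CCut c a s₃ t₃)
    (hx : sbtw t₃ x s₁) (hy : sbtw t₁ y s₂) : sbtw c x y := by
  have S1 : sbtw c a s₁ := step1 habc c1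
  have S2 : sbtw c x s₁ := by
    rcases c3 with ⟨e, hm⟩ | ⟨_, e, _⟩
    · exact sbtw_trans_left (sbtw_trans_right (e ▸ hm) S1) hx
    · rw [e] at hx; exact hx
  rcases c1 with ⟨e, hm⟩ | ⟨es, et, hemp⟩
  · -- midpoint case : s₁ = t₁, hm : sbtw a s₁ b
    rw [← e] at hy   -- hy : sbtw s₁ y s₂
    have hmy : sbtw c s₁ y := by
      rcases c2 with ⟨_, hm2⟩ | ⟨es2, _, _⟩
      · -- hm2 : sbtw b s₂ c
        have h1 : sbtw s₁ b c := sbtwL1 habc hm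
        have h2 : sbtw s₁ s₂ c := sbtw_trans_left h1 hm2
        exact (sbtw_trans_right hy h2).cyclic_right
      · rw [es2] at hy; exact hy.cyclic_right
    exact sbtw_trans_right S2 hmy
  · -- empty gap : s₁ = b, t₁ = a
    rw [es] at S2
    rw [et] at hy
    by_cases hyb : y = b
    · rw [hyb]; exact S2
    · have habs2 : sbtw a b s₂ := by
        rcases c2 with ⟨_, hm2⟩ | ⟨es2, _, _⟩
        · exact sbtwL3 habc hm2
        · rw [es2]; exact habc
      have hay : a ≠ y := sbtw_ne12 hy
      have hba : b ≠ a := (sbtw_ne12 habc).symm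
      rcases sbtw_total3 hay hyb hba with h | h
      · exact absurd h (hemp y)
      · have h1 : sbtw b y s₂ := sbtwL1 hy h
        have h2 : sbtw b y c := by
          rcases c2 with ⟨_, hm2⟩ | ⟨es2, _, _⟩
          · exact sbtw_trans_right h1 hm2
          · rw [es2] at h1; exact h1
        exact sbtw_trans_right S2 h2.cyclic_right

/-- Main order-theoretic lemma: every strictly between triple has "arc neighbourhoods"
whose product consists of strictly between triples. -/
theorem sbtw_nbhd (h : sbtw a b c) :
    ∃ s₁ t₁ s₂ t₂ s₃ t₃ : α,
      sbtw t₃ a s₁ ∧ sbtw t₁ b s₂ ∧ sbtw t₂ c s₃ ∧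
      ∀ x y z, sbtw t₃ x s₁ → sbtw t₁ y s₂ → sbtw t₂ z s₃ → sbtw x y z := by
  obtain ⟨s₁, t₁, c1⟩ := ccut_exists a b
  obtain ⟨s₂, t₂, c2⟩ := ccut_exists b c
  obtain ⟨s₃, t₃, c3⟩ := ccut_exists c a
  refine ⟨s₁, t₁, s₂, t₂, s₃, t₃, mem_step h c1 c3, mem_step h.cyclic_left c2 c1,
    mem_step h.cyclic_left.cyclic_left c3 c2, ?_⟩
  intro x y z hx hy hz
  have F1 : sbtw c x y := step h c1 c2 c3 hx hy
  have F2 : sbtw a y z := step h.cyclic_left c2 c3 c1 hy hz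
  have F3 : sbtw b z x := step h.cyclic_left.cyclic_left c3 c1 c2 hz hx
  have hxy : x ≠ y := sbtw_ne23 F1
  have hyz : y ≠ z := sbtw_ne23 F2
  have hzx : z ≠ x := sbtw_ne23 F3
  rcases sbtw_total3 hxy hyz hzx with hgood | hbad
  · exact hgood
  · exfalso
    have G1 : sbtw x z c := sbtw_trans_right hbad F1.cyclic_left
    have G2 : sbtw x b z := F3.cyclic_left.cyclic_left
    have G5 : sbtw z y c := sbtwL3 hbad.cyclic_left F1.cyclic_left.cyclic_left
    have G6 : sbtw z a c := sbtw_trans_right F2.cyclic_left.cyclic_left G5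
    have zcx : sbtw z c x := G1.cyclic_left
    have acx : sbtw a c x := sbtwL2 G6 zcx
    have zax : sbtw z a x := sbtw_trans_right G6 zcx
    have xba : sbtw x b a := sbtw_trans_right G2 zax.cyclic_right
    have bac : sbtw b a c := sbtwL2 xba acx.cyclic_right
    exact sbtw_asymm h bac.cyclic_left.cyclic_left

end CircAux

private theorem isOpen_arc {X : Type*} [CircularOrder X] (a b : X) :
    @IsOpen X (intervalTop X) {x | sbtw a x b} := by
  by_cases hab : a = b
  · subst hab
    have he : {x | sbtw a x a} = (∅ : Set X) := by
      ext x; simp [sbtw_irrefl_left_right]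
    rw [he]
    exact @isOpen_empty _ (intervalTop X)
  · have : {x | sbtw a x b} = (cIcc b a)ᶜ := by
      ext x
      simp only [cIcc, Set.mem_compl_iff, Set.mem_union, Set.mem_setOf_eq,
        Set.mem_insert_iff, Set.mem_singleton_iff]
      constructor
      · intro hx
        push_neg
        exact ⟨sbtw_asymm hx, sbtw_ne23 hx, (sbtw_ne12 hx).symm⟩
      · intro hx
        push_neg at hx
        obtain ⟨h1, h2, h3⟩ := hx
        rcases sbtw_total3 (Ne.symm h3) h2 (Ne.symm hab) with h | h
        · exact h
        · exact absurd h.cyclic_left h1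
    rw [this]
    exact TopologicalSpace.GenerateOpen.basic _ ⟨b, a, rfl⟩

/-- Let a topological group `G` act continuously (jointly) on a compact Hausdorff space `X`
whose topology is the interval topology of a circular order. If every element of a dense
subset `D ⊆ G` preserves the circular order, then every element of `G` preserves it. -/
theorem stmt6 {G X : Type*} [Group G] [TopologicalSpace G] [IsTopologicalGroup G]
    [CircularOrder X] [TopologicalSpace X] [CompactSpace X] [T2Space X]
    (htop : (inferInstance : TopologicalSpace X) = intervalTop X)
    [MulAction G X] [ContinuousSMul G X]
    (D : Set G) (hD : Dense D)
    (hord : ∀ d ∈ D, ∀ x y z : X, sbtw x y z → sbtw (d • x) (d • y) (d • z)) :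
    ∀ g : G, ∀ x y z : X, sbtw x y z → sbtw (g • x) (g • y) (g • z) := by
  intro g x y z hxyz
  have inj := MulAction.injective (β := X) g
  have ne1 : g • x ≠ g • y := inj.ne (sbtw_ne12 hxyz)
  have ne2 : g • y ≠ g • z := inj.ne (sbtw_ne23 hxyz)
  have ne3 : g • z ≠ g • x := inj.ne (sbtw_ne23 hxyz.cyclic_left)
  rcases sbtw_total3 ne1 ne2 ne3 with hgood | hbad
  · exact hgood
  · exfalso
    -- hbad : sbtw (g • x) (g • z) (g • y)
    obtain ⟨s₁, t₁, s₂, t₂, s₃, t₃, ha, hb, hc, hkey⟩ := sbtw_nbhd hbad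
    set T' : Set G :=
      {h : G | sbtw t₃ (h • x) s₁ ∧ sbtw t₁ (h • z) s₂ ∧ sbtw t₂ (h • y) s₃} with hT'
    have hopen : ∀ p q : X, IsOpen {u : X | sbtw p u q} := by
      intro p q
      have := isOpen_arc (X := X) p q
      rw [← htop] at this
      exact this
    have hcx : Continuous fun h : G => h • x := continuous_id.smul continuous_const
    have hcy : Continuous fun h : G => h • y := continuous_id.smul continuous_const
    have hcz : Continuous fun h : G => h • z := continuous_id.smul continuous_const
    have hT'open : IsOpen T' := by
      have : T' = ((fun h : G => h • x) ⁻¹' {u | sbtw t₃ u s₁}) ∩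
          (((fun h : G => h • z) ⁻¹' {u | sbtw t₁ u s₂}) ∩
           ((fun h : G => h • y) ⁻¹' {u | sbtw t₂ u s₃})) := by
        ext h; simp [hT', Set.mem_inter_iff, and_assoc]
      rw [this]
      exact (( (hopen _ _).preimage hcx).inter
        (((hopen _ _).preimage hcz).inter ((hopen _ _).preimage hcy)))
    have hgT' : g ∈ T' := ⟨ha, hb, hc⟩
    obtain ⟨d, hdD, hdT'⟩ := hD.exists_mem_open hT'open ⟨g, hgT'⟩
    have h1 := hord d hdD x y z hxyz
    have h2 : sbtw (d • x) (d • z) (d • y) := hkey _ _ _ hdT'.1 hdT'.2.1 hdT'.2.2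
    exact sbtw_asymm h2 h1.cyclic_left
end

section
/- Let a group G act ultrahomogeneously on an infinite circularly ordered set X. Then the circular order on X is dense: for all distinct a, b ∈ X there exists x ∈ X with [a,x,b] (no open interval (a,b) is empty). -/
/-- An action of a group `G` on a circularly ordered set `X` is ultrahomogeneous if it is
effective, every `g ∈ G` preserves the circular order, and every c-order isomorphism
between two finite subsets of `X` extends to an element of `G`. -/
def IsUltrahomogeneous (G X : Type*) [Group G] [CircularOrder X] [MulAction G X] : Prop :=
  (∀ g : G, (∀ x : X, g • x = x) → g = 1) ∧
  (∀ (g : G) (a b c : X), sbtw a b c → sbtw (g • a) (g • b) (g • c)) ∧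
  (∀ (A B : Finset X) (φ : X → X), Set.BijOn φ (↑A : Set X) (↑B : Set X) →
    (∀ a ∈ A, ∀ b ∈ A, ∀ c ∈ A, (sbtw a b c ↔ sbtw (φ a) (φ b) (φ c))) →
    ∃ g : G, ∀ a ∈ A, g • a = φ a)

lemma sbtw_total_of_ne {X : Type*} [CircularOrder X] {x y z : X}
    (hxy : x ≠ y) (hyz : y ≠ z) (hxz : x ≠ z) : sbtw x y z ∨ sbtw x z y := by
  rcases btw_total x y z with h' | h'
  · left
    refine h'.sbtw_of_not_btw fun h'' => ?_
    rcases btw_antisymm h' h'' with h | h | h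
    · exact hxy h
    · exact hyz h
    · exact hxz h.symm
  · right
    have h1 : btw x z y := h'.cyclic_left.cyclic_left
    refine h1.sbtw_of_not_btw fun h'' => ?_
    rcases btw_antisymm h1 h'' with h | h | h
    · exact hxz h
    · exact hyz h.symm
    · exact hxy h.symm

/-- If a group acts ultrahomogeneously on an infinite circularly ordered set `X`, then the
circular order of `X` is dense: every open interval `(a,b)` with `a ≠ b` is nonempty. -/
theorem stmt7 {G X : Type*} [Group G] [CircularOrder X] [MulAction G X] [Infinite X]
    (h : IsUltrahomogeneous G X) :
    ∀ a b : X, a ≠ b → ∃ x : X, sbtw a x b := by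
  classical
  intro a b hab
  by_contra hempty
  push_neg at hempty
  have key : ∀ x : X, x ≠ a → x ≠ b → sbtw b x a := by
    intro x hxa hxb
    rcases sbtw_total_of_ne hxa.symm hxb hab with h' | h'
    · exact absurd h' (hempty x)
    · exact h'.cyclic_left
  have aux : ∀ c d : X, c ≠ a → c ≠ b → d ≠ a → d ≠ b → c ≠ d → sbtw b c d → False := by
    intro c d hca hcb hda hdb hcd H1
    have H2 : sbtw b d a := key d hda hdb
    set φ : X → X := fun x => if x = b then b else if x = c then d else a with hφ
    have hφb : φ b = b := by simp [hφ]
    have hφc : φ c = d := by simp [hφ, hcb]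
    have hφd : φ d = a := by simp [hφ, hdb, hcd.symm]
    have hbij : Set.BijOn φ (↑({b, c, d} : Finset X) : Set X) (↑({b, d, a} : Finset X) : Set X) := by
      have himg : (↑({b, d, a} : Finset X) : Set X) = φ '' (↑({b, c, d} : Finset X) : Set X) := by
        simp [Set.image_insert_eq, hφb, hφc, hφd]
      rw [himg]
      apply Set.InjOn.bijOn_image
      intro x hx y hy hxy
      simp only [Finset.coe_insert, Finset.coe_singleton, Set.mem_insert_iff,
        Set.mem_singleton_iff] at hx hy
      rcases hx with rfl | rfl | rfl <;> rcases hy with rfl | rfl | rfl <;>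
        simp_all [hφb, hφc, hφd]
    have r1 := H1.cyclic_left
    have r2 := H1.cyclic_right
    have n1 := H1.not_sbtw
    have n2 := r1.not_sbtw
    have n3 := r2.not_sbtw
    have s1 := H2.cyclic_left
    have s2 := H2.cyclic_right
    have m1 := H2.not_sbtw
    have m2 := s1.not_sbtw
    have m3 := s2.not_sbtw
    have hiso : ∀ u ∈ ({b, c, d} : Finset X), ∀ v ∈ ({b, c, d} : Finset X),
        ∀ w ∈ ({b, c, d} : Finset X), (sbtw u v w ↔ sbtw (φ u) (φ v) (φ w)) := by
      intro u hu v hv w hw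
      simp only [Finset.mem_insert, Finset.mem_singleton] at hu hv hw
      rcases hu with rfl | rfl | rfl <;> rcases hv with rfl | rfl | rfl <;>
        rcases hw with rfl | rfl | rfl <;>
        simp only [hφb, hφc, hφd] <;>
        first
          | exact Iff.rfl
          | exact iff_of_false sbtw_irrefl_left sbtw_irrefl_left
          | exact iff_of_false sbtw_irrefl_right sbtw_irrefl_right
          | exact iff_of_false sbtw_irrefl_left_right sbtw_irrefl_left_right
          | exact iff_of_true ‹_› ‹_›
          | exact iff_of_false ‹_› ‹_›
    obtain ⟨g, hg⟩ := h.2.2 ({b, c, d} : Finset X) ({b, d, a} : Finset X) φ hbij hiso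
    have hgb : g • b = b := by rw [hg b (by simp), hφb]
    have hgd : g • d = a := by rw [hg d (by simp), hφd]
    have hs : sbtw (g • b) (g • d) (g • a) := h.2.1 g b d a H2
    rw [hgb, hgd] at hs
    exact hempty (g • a) hs.cyclic_left
  obtain ⟨c, hc⟩ := Infinite.exists_notMem_finset ({a, b} : Finset X)
  obtain ⟨d, hd⟩ := Infinite.exists_notMem_finset ({a, b, c} : Finset X)
  simp only [Finset.mem_insert, Finset.mem_singleton, not_or] at hc hd
  obtain ⟨hca, hcb⟩ := hc
  obtain ⟨hda, hdb, hdc⟩ := hd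
  rcases sbtw_total_of_ne (Ne.symm hcb) (fun h' => hdc h'.symm) (Ne.symm hdb) with h' | h'
  · exact aux c d hca hcb hda hdb (fun h'' => hdc h''.symm) h'
  · exact aux d c hda hdb hca hcb hdc h'
end

section
/- Let a group G act ultrahomogeneously on an infinite circularly ordered set X, fix z ∈ X, and let H = { g ∈ G : g z = z } be the stabilizer of z. Define a relation <_z on X \ {z} by: a <_z b iff [z,a,b]. Then: (i) <_z is a strict linear order on X \ {z}; (ii) every h ∈ H is strictly order-preserving for <_z (a <_z b implies h a <_z h b); and (iii) the action of H on (X \ {z}, <_z) is ultrahomogeneous: for any two finite chains x₁ <_z x₂ <_z ⋯ <_z x_k and y₁ <_z y₂ <_z ⋯ <_z y_k in X \ {z} there exists h ∈ H with h xᵢ = yᵢ for all i. -/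
set_option linter.unusedSectionVars false
set_option linter.unusedVariables false

section
variable {X : Type*} [CircularOrder X]

lemma my_sbtw_ne {a b c : X} (h : sbtw a b c) : a ≠ b ∧ b ≠ c ∧ a ≠ c := by
  refine ⟨?_, ?_, ?_⟩ <;> rintro rfl
  · exact sbtw_irrefl_left h
  · exact sbtw_irrefl_right h
  · exact sbtw_irrefl_left_right h

lemma my_sbtw_total {a b c : X} (h1 : a ≠ b) (h2 : b ≠ c) (h3 : a ≠ c) :
    sbtw a b c ∨ sbtw c b a := by
  rcases btw_total a b c with hb | hb
  · left
    refine hb.sbtw_of_not_btw fun h' => ?_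
    rcases hb.antisymm h' with h | h | h <;> simp_all
  · right
    refine hb.sbtw_of_not_btw fun h' => ?_
    rcases hb.antisymm h' with h | h | h <;> simp_all

lemma my_ltz_trans {z a b c : X} (h1 : sbtw z a b) (h2 : sbtw z b c) : sbtw z a c :=
  (sbtw_trans_left h1.cyclic_left h2.cyclic_left).cyclic_right

lemma my_chain3 {z u v w : X} (h1 : sbtw z u v) (h2 : sbtw z v w) : sbtw u v w := by
  have huv := (my_sbtw_ne h1).2.1
  have hvw := (my_sbtw_ne h2).2.1
  have huw := (my_sbtw_ne (my_ltz_trans h1 h2)).2.1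
  rcases my_sbtw_total huv hvw huw with h | h
  · exact h
  · exact absurd h.cyclic_left (sbtw_asymm (sbtw_trans_left h2.cyclic_left.cyclic_left h1))

end

section
variable {X : Type*} [CircularOrder X]

/-- Cyclic ordering of a triple of indices. -/
def myC3 {n : ℕ} (p q r : Fin n) : Prop :=
  (p < q ∧ q < r) ∨ (q < r ∧ r < p) ∨ (r < p ∧ p < q)

lemma myC3_total {n : ℕ} {p q r : Fin n} (h1 : p ≠ q) (h2 : q ≠ r) (h3 : p ≠ r) :
    myC3 p q r ∨ myC3 p r q := by
  unfold myC3
  rcases h1.lt_or_gt with a | a <;> rcases h2.lt_or_gt with b | b <;>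
    rcases h3.lt_or_gt with c | c <;> tauto

variable {z : X} {k : ℕ} {x : Fin k → X}

/-- The chain `z, x 0, x 1, ...` indexed by `Fin (k+1)`. -/
def myE (z : X) (x : Fin k → X) : Fin (k+1) → X := Fin.cases z x

@[simp] lemma myE_zero : myE z x 0 = z := rfl
@[simp] lemma myE_succ (i : Fin k) : myE z x i.succ = x i := rfl

lemma my_e_mono (hc : ∀ i j, i < j → sbtw z (x i) (x j)) {p q r : Fin (k+1)}
    (hpq : p < q) (hqr : q < r) :
    sbtw (myE z x p) (myE z x q) (myE z x r) := by
  induction r using Fin.cases with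
  | zero => exact absurd hqr (Fin.not_lt_zero _)
  | succ l =>
    induction q using Fin.cases with
    | zero => exact absurd hpq (Fin.not_lt_zero _)
    | succ j =>
      have hjl : j < l := Fin.succ_lt_succ_iff.mp hqr
      induction p using Fin.cases with
      | zero => exact hc j l hjl
      | succ i => exact my_chain3 (hc i j (Fin.succ_lt_succ_iff.mp hpq)) (hc j l hjl)

lemma my_e_ne (hx : ∀ i, x i ≠ z) (hc : ∀ i j, i < j → sbtw z (x i) (x j))
    {p q : Fin (k+1)} (h : p ≠ q) :
    myE z x p ≠ myE z x q := by
  have key : ∀ p q : Fin (k+1), p < q → myE z x p ≠ myE z x q := by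
    intro p q hpq
    induction q using Fin.cases with
    | zero => exact absurd hpq (Fin.not_lt_zero _)
    | succ j =>
      induction p using Fin.cases with
      | zero => exact (hx j).symm
      | succ i => exact (my_sbtw_ne (hc i j (Fin.succ_lt_succ_iff.mp hpq))).2.1
  rcases h.lt_or_gt with hlt | hlt
  · exact key _ _ hlt
  · exact (key _ _ hlt).symm

lemma my_e_sbtw_iff (hx : ∀ i, x i ≠ z) (hc : ∀ i j, i < j → sbtw z (x i) (x j))
    {p q r : Fin (k+1)} :
    sbtw (myE z x p) (myE z x q) (myE z x r) ↔ myC3 p q r := by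
  constructor
  · intro hs
    have hne := my_sbtw_ne hs
    have hpq : p ≠ q := fun h => hne.1 (by rw [h])
    have hqr : q ≠ r := fun h => hne.2.1 (by rw [h])
    have hpr : p ≠ r := fun h => hne.2.2 (by rw [h])
    rcases myC3_total hpq hqr hpr with h | h
    · exact h
    · have hrev : sbtw (myE z x p) (myE z x r) (myE z x q) := by
        rcases h with ⟨a, b⟩ | ⟨a, b⟩ | ⟨a, b⟩
        · exact my_e_mono hc a b
        · exact (my_e_mono hc a b).cyclic_right
        · exact (my_e_mono hc a b).cyclic_left
      exact absurd hs.cyclic_left (sbtw_asymm hrev)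
  · rintro (⟨a, b⟩ | ⟨a, b⟩ | ⟨a, b⟩)
    · exact my_e_mono hc a b
    · exact (my_e_mono hc a b).cyclic_right
    · exact (my_e_mono hc a b).cyclic_left

end


/-- Let `G` act ultrahomogeneously on an infinite circularly ordered set `X`, fix `z ∈ X`
and let `H = St(z)`. The cut relation `a <_z b ↔ [z,a,b]` is a strict linear order on
`X \ {z}`, every `h ∈ H` is strictly order preserving for it, and the action of `H` on
`(X \ {z}, <_z)` is ultrahomogeneous: any finite chain can be mapped onto any other finite
chain of the same length by some element of `H`. -/
theorem stmt8 {G X : Type*} [Group G] [CircularOrder X] [MulAction G X] [Infinite X]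
    (h : IsUltrahomogeneous G X) (z : X) :
    let lt : X → X → Prop := fun a b => sbtw z a b
    -- (i) `<_z` is a strict linear order on `X \ {z}`:
    (∀ a : X, a ≠ z → ¬ lt a a) ∧
    (∀ a b c : X, a ≠ z → b ≠ z → c ≠ z → lt a b → lt b c → lt a c) ∧
    (∀ a b : X, a ≠ z → b ≠ z → a ≠ b → lt a b ∨ lt b a) ∧
    -- (ii) every element of the stabilizer `H = St(z)` preserves `<_z`:
    (∀ g : G, g • z = z → ∀ a b : X, a ≠ z → b ≠ z → lt a b → lt (g • a) (g • b)) ∧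
    -- (iii) the action of `H` on `(X \ {z}, <_z)` is ultrahomogeneous:
    (∀ (k : ℕ) (x y : Fin k → X),
      (∀ i, x i ≠ z) → (∀ i, y i ≠ z) →
      (∀ i j, i < j → lt (x i) (x j)) → (∀ i j, i < j → lt (y i) (y j)) →
      ∃ g : G, g • z = z ∧ ∀ i, g • x i = y i) := by
  intro lt
  refine ⟨?_, ?_, ?_, ?_, ?_⟩
  · intro a _ hlt
    exact sbtw_irrefl_right hlt
  · intro a b c _ _ _ h1 h2
    exact my_ltz_trans h1 h2
  · intro a b ha hb hab
    rcases my_sbtw_total (Ne.symm ha) hab (Ne.symm hb) with hs | hs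
    · exact Or.inl hs
    · exact Or.inr hs.cyclic_right
  · intro g hg a b _ _ hab
    have := h.2.1 g z a b hab
    rwa [hg] at this
  · intro k x y hx hy hcx hcy
    classical
    have hinjx : Function.Injective (myE z x) := by
      intro p q hpq
      by_contra hne
      exact my_e_ne hx hcx hne hpq
    have hinjy : Function.Injective (myE z y) := by
      intro p q hpq
      by_contra hne
      exact my_e_ne hy hcy hne hpq
    have : Nonempty X := ⟨z⟩
    set ψ : X → Fin (k+1) := Function.invFun (myE z x) with hψdef
    have hψ : ∀ p, ψ (myE z x p) = p := Function.leftInverse_invFun hinjx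
    set φ : X → X := fun a => myE z y (ψ a) with hφdef
    have hφ : ∀ p, φ (myE z x p) = myE z y p := fun p => by simp [hφdef, hψ]
    set A : Finset X := Finset.image (myE z x) Finset.univ with hA
    set B : Finset X := Finset.image (myE z y) Finset.univ with hB
    have hmemA : ∀ a ∈ A, ∃ p, myE z x p = a := by
      intro a ha
      rw [hA] at ha
      rcases Finset.mem_image.mp ha with ⟨p, _, hp⟩
      exact ⟨p, hp⟩
    have hmemA' : ∀ p, myE z x p ∈ A := by
      intro p
      rw [hA]
      exact Finset.mem_image.mpr ⟨p, Finset.mem_univ _, rfl⟩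
    have hmemB' : ∀ p, myE z y p ∈ B := by
      intro p
      rw [hB]
      exact Finset.mem_image.mpr ⟨p, Finset.mem_univ _, rfl⟩
    have hbij : Set.BijOn φ (↑A : Set X) (↑B : Set X) := by
      refine ⟨?_, ?_, ?_⟩
      · intro a ha
        obtain ⟨p, rfl⟩ := hmemA a ha
        rw [hφ p]
        exact Finset.mem_coe.mpr (hmemB' p)
      · intro a ha b hb hab
        obtain ⟨p, rfl⟩ := hmemA a ha
        obtain ⟨q, rfl⟩ := hmemA b hb
        rw [hφ p, hφ q] at hab
        rw [hinjy hab]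
      · intro b hb
        rw [Finset.mem_coe, hB] at hb
        rcases Finset.mem_image.mp hb with ⟨p, _, rfl⟩
        exact ⟨myE z x p, Finset.mem_coe.mpr (hmemA' p), hφ p⟩
    have hiff : ∀ a ∈ A, ∀ b ∈ A, ∀ c ∈ A, (sbtw a b c ↔ sbtw (φ a) (φ b) (φ c)) := by
      intro a ha b hb c hc
      obtain ⟨p, rfl⟩ := hmemA a ha
      obtain ⟨q, rfl⟩ := hmemA b hb
      obtain ⟨r, rfl⟩ := hmemA c hc
      rw [hφ p, hφ q, hφ r, my_e_sbtw_iff hx hcx, my_e_sbtw_iff hy hcy]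
    obtain ⟨g, hg⟩ := h.2.2 A B φ hbij hiff
    refine ⟨g, ?_, ?_⟩
    · have hzA : z ∈ A := hmemA' 0
      have := hg z hzA
      rw [this]
      have := hφ 0
      simpa using this
    · intro i
      have hxiA : x i ∈ A := hmemA' i.succ
      have h1 := hg (x i) hxiA
      have h2 := hφ i.succ
      simp only [myE_succ] at h2
      rw [h1, h2]
end

section
/- Let G be a topological group with identity e, and let H be a subgroup of G. Assume: (i) H is Roelcke precompact as a topological group with the subspace topology, i.e., for every neighborhood U of e in G there is a finite set F ⊆ H such that H ⊆ (U ∩ H) · F · (U ∩ H); and (ii) the coset space G/H is precompact in the right uniformity, i.e., for every neighborhood U of e in G there is a finite set E ⊆ G such that G = U · E · H. Then G is Roelcke precompact: for every neighborhood U of e in G there is a finite set F' ⊆ G such that G = U · F' · U. -/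
open Pointwise

/-- Let `H` be a subgroup of a topological group `G` such that (i) `H` is Roelcke
precompact as a topological group (for every neighbourhood `U` of the identity in `G`
there is a finite `F ⊆ H` with `H ⊆ (U ∩ H)·F·(U ∩ H)`), and (ii) the coset space `G/H`
is precompact in its right uniformity (for every neighbourhood `U` of the identity there
is a finite `E ⊆ G` with `G = U·E·H`). Then `G` is Roelcke precompact: for every
neighbourhood `U` of the identity there is a finite `F' ⊆ G` with `G = U·F'·U`. -/
theorem stmt12 {G : Type*} [Group G] [TopologicalSpace G] [IsTopologicalGroup G]
    (H : Subgroup G)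
    (hH : ∀ U ∈ nhds (1 : G), ∃ F : Finset G, (↑F : Set G) ⊆ (H : Set G) ∧
      (H : Set G) ⊆ (U ∩ (H : Set G)) * ((↑F : Set G) * (U ∩ (H : Set G))))
    (hGH : ∀ U ∈ nhds (1 : G), ∃ E : Finset G,
      (Set.univ : Set G) ⊆ U * ((↑E : Set G) * (H : Set G))) :
    ∀ U ∈ nhds (1 : G), ∃ F' : Finset G,
      (Set.univ : Set G) ⊆ U * ((↑F' : Set G) * U) := by
  classical
  intro U hU
  obtain ⟨W, hW, hWW⟩ := exists_nhds_one_split hU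
  obtain ⟨E, hE⟩ := hGH W hW
  set V : Set G := U ∩ ⋂ e ∈ (E : Finset G), (fun x => e * x * e⁻¹) ⁻¹' W with hVdef
  have hV : V ∈ nhds (1 : G) := by
    refine Filter.inter_mem hU ?_
    refine (Filter.biInter_mem E.finite_toSet).2 ?_
    intro e _
    have hc : ContinuousAt (fun x : G => e * x * e⁻¹) 1 :=
      ((continuous_const.mul continuous_id).mul continuous_const).continuousAt
    have hW' : W ∈ nhds (e * 1 * e⁻¹) := by simpa using hW
    exact hc.preimage_mem_nhds hW'
  obtain ⟨F, hFH, hF⟩ := hH V hV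
  refine ⟨E * F, fun g _ => ?_⟩
  obtain ⟨w, hw, x, hx, rfl⟩ := hE (Set.mem_univ g)
  obtain ⟨e, he, h, hh, rfl⟩ := hx
  obtain ⟨v₁, hv₁, y, hy, rfl⟩ := hF hh
  obtain ⟨f, hf, v₂, hv₂, rfl⟩ := hy
  have hconj : e * v₁ * e⁻¹ ∈ W := by
    have := hv₁.1.2
    simpa using Set.mem_iInter₂.1 this e he
  refine ⟨w * (e * v₁ * e⁻¹), hWW w hw _ hconj, (e * f) * v₂, ?_, by group⟩
  refine ⟨e * f, ?_, v₂, hv₂.1.1, rfl⟩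
  rw [Finset.coe_mul]
  exact Set.mul_mem_mul he hf
end

section
/- Let a group G act ultrahomogeneously on an infinite linearly ordered set X. Then for every finite subset F ⊆ X there exists a finite set E ⊆ G such that G = U_F · E · U_F, where U_F = { g ∈ G : g s = s for all s ∈ F } is the pointwise stabilizer of F; equivalently, there are only finitely many double cosets U_F g U_F in G. (This expresses that G, in its topology of pointwise convergence on the discrete set X, is Roelcke precompact.) -/
open Pointwise

/-- An action of a group `G` on a linearly ordered set `X` is ultrahomogeneous if it is
effective, every `g ∈ G` is order preserving, and every order isomorphism between two
finite subsets of `X` extends to an element of `G`. -/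
def IsUltrahomogeneousLin (G X : Type*) [Group G] [LinearOrder X] [MulAction G X] : Prop :=
  (∀ g : G, (∀ x : X, g • x = x) → g = 1) ∧
  (∀ (g : G) (a b : X), a < b → g • a < g • b) ∧
  (∀ (A B : Finset X) (φ : X → X), Set.BijOn φ (↑A : Set X) (↑B : Set X) →
    (∀ a ∈ A, ∀ b ∈ A, (a < b ↔ φ a < φ b)) →
    ∃ g : G, ∀ a ∈ A, g • a = φ a)

lemma ultra_smul_lt_iff {G X : Type*} [Group G] [LinearOrder X] [MulAction G X]
    (h : IsUltrahomogeneousLin G X) (k : G) (a b : X) : k • a < k • b ↔ a < b := by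
  constructor
  · intro hk
    rcases lt_trichotomy a b with h1 | h1 | h1
    · exact h1
    · exact absurd hk (by rw [h1]; exact lt_irrefl _)
    · exact absurd hk (lt_asymm (h.2.1 k b a h1))
  · exact h.2.1 k a b

/-- Key lemma: if `g` and `g'` have the same "pattern" on `F`, then there is
`hh` fixing `F` pointwise with `hh • (g' • s) = g • s` for all `s ∈ F`. -/
lemma ultra_key {G X : Type*} [Group G] [LinearOrder X] [MulAction G X]
    (h : IsUltrahomogeneousLin G X) (F : Finset X) (g g' : G)
    (hlt : ∀ s ∈ F, ∀ t ∈ F, (t < g • s ↔ t < g' • s))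
    (hmem : ∀ s ∈ F, (g • s ∈ F ↔ g' • s ∈ F)) :
    ∃ hh : G, (∀ s ∈ F, hh • s = s) ∧ (∀ s ∈ F, hh • (g' • s) = g • s) := by
  classical
  -- equality transfer
  have heq : ∀ s ∈ F, g • s ∈ F → g • s = g' • s := by
    intro s hs hgF
    have hg'F := (hmem s hs).1 hgF
    rcases lt_trichotomy (g • s) (g' • s) with h1 | h1 | h1
    · exact absurd ((hlt s hs _ hgF).2 h1) (lt_irrefl _)
    · exact h1
    · exact absurd ((hlt s hs _ hg'F).1 h1) (lt_irrefl _)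
  have heq' : ∀ s ∈ F, g' • s ∈ F → g • s = g' • s := by
    intro s hs hg'F
    exact heq s hs ((hmem s hs).2 hg'F)
  have hgt : ∀ s ∈ F, ∀ t ∈ F, (g • s < t ↔ g' • s < t) := by
    intro s hs t ht
    constructor
    · intro h1
      rcases lt_trichotomy (g' • s) t with h2 | h2 | h2
      · exact h2
      · have : g • s = t := (heq' s hs (h2 ▸ ht)).trans h2
        exact absurd h1 (this ▸ lt_irrefl _)
      · exact absurd ((hlt s hs t ht).2 h2) (lt_asymm h1)
    · intro h1
      rcases lt_trichotomy (g • s) t with h2 | h2 | h2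
      · exact h2
      · have : g • s = g' • s := heq s hs (h2 ▸ ht)
        exact absurd h1 (by rw [← this, h2]; exact lt_irrefl _)
      · exact absurd ((hlt s hs t ht).1 h2) (lt_asymm h1)
  set φ : X → X := fun x => if x ∈ F then x else g • g'⁻¹ • x with hφ
  have φF : ∀ t ∈ F, φ t = t := fun t ht => if_pos ht
  have φg' : ∀ s ∈ F, φ (g' • s) = g • s := by
    intro s hs
    by_cases hx : g' • s ∈ F
    · rw [hφ]; simp only [if_pos hx]; exact (heq' s hs hx).symm
    · rw [hφ]; simp only [if_neg hx, inv_smul_smul]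
  set A : Finset X := F ∪ F.image (fun s => g' • s) with hA
  set B : Finset X := F ∪ F.image (fun s => g • s) with hB
  have memA : ∀ a ∈ A, a ∈ F ∨ ∃ s ∈ F, a = g' • s := by
    intro a ha
    rcases Finset.mem_union.1 ha with h1 | h1
    · exact Or.inl h1
    · obtain ⟨s, hs, rfl⟩ := Finset.mem_image.1 h1
      exact Or.inr ⟨s, hs, rfl⟩
  have hord : ∀ a ∈ A, ∀ b ∈ A, (a < b ↔ φ a < φ b) := by
    intro a ha b hb
    rcases memA a ha with h1 | ⟨s, hs, rfl⟩ <;> rcases memA b hb with h2 | ⟨s', hs', rfl⟩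
    · rw [φF a h1, φF b h2]
    · rw [φF a h1, φg' s' hs']
      exact (hlt s' hs' a h1).symm
    · rw [φF b h2, φg' s hs]
      exact (hgt s hs b h2).symm
    · rw [φg' s hs, φg' s' hs']
      rw [ultra_smul_lt_iff h, ultra_smul_lt_iff h]
  have hbij : Set.BijOn φ (↑A : Set X) (↑B : Set X) := by
    refine ⟨?_, ?_, ?_⟩
    · intro a ha
      rcases memA a (Finset.mem_coe.1 ha) with h1 | ⟨s, hs, rfl⟩
      · rw [φF a h1]
        exact Finset.mem_coe.2 (Finset.mem_union_left _ h1)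
      · rw [φg' s hs]
        exact Finset.mem_coe.2 (Finset.mem_union_right _ (Finset.mem_image_of_mem _ hs))
    · intro a ha b hb hab
      by_contra hne
      rcases lt_or_gt_of_ne hne with h1 | h1
      · exact absurd hab (ne_of_lt ((hord a ha b hb).1 h1))
      · exact absurd hab.symm (ne_of_lt ((hord b hb a ha).1 h1))
    · intro b hb
      rcases Finset.mem_union.1 (Finset.mem_coe.1 hb) with h1 | h1
      · exact ⟨b, Finset.mem_coe.2 (Finset.mem_union_left _ h1), φF b h1⟩
      · obtain ⟨s, hs, rfl⟩ := Finset.mem_image.1 h1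
        exact ⟨g' • s, Finset.mem_coe.2 (Finset.mem_union_right _
          (Finset.mem_image_of_mem _ hs)), φg' s hs⟩
  obtain ⟨hh, hhA⟩ := h.2.2 A B φ hbij hord
  refine ⟨hh, ?_, ?_⟩
  · intro s hs
    rw [hhA s (Finset.mem_union_left _ hs), φF s hs]
  · intro s hs
    rw [hhA (g' • s) (Finset.mem_union_right _ (Finset.mem_image_of_mem _ hs)), φg' s hs]

/-- If a group `G` acts ultrahomogeneously on an infinite linearly ordered set `X`, then
for every finite `F ⊆ X` there is a finite `E ⊆ G` with `G = U_F · E · U_F`, where `U_F`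
is the pointwise stabilizer of `F`: there are only finitely many double cosets
`U_F g U_F` (Roelcke precompactness of `G` in the pointwise topology). -/
theorem stmt13 {G X : Type*} [Group G] [LinearOrder X] [MulAction G X] [Infinite X]
    (h : IsUltrahomogeneousLin G X) (F : Finset X) :
    ∃ E : Finset G, (Set.univ : Set G) ⊆
      {g : G | ∀ s ∈ F, g • s = s} * ((↑E : Set G) * {g : G | ∀ s ∈ F, g • s = s}) := by
  classical
  set V := ({x // x ∈ F} → ({x // x ∈ F} → Bool) × Bool) with hV
  let I : G → V := fun g s => (fun t => decide ((t : X) < g • (s : X)), decide (g • (s : X) ∈ F))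
  let sec : V → G := fun v => if hv : ∃ g, I g = v then hv.choose else 1
  refine ⟨Finset.univ.image sec, ?_⟩
  intro g _
  have hIsec : I (sec (I g)) = I g := by
    have hv : ∃ k, I k = I g := ⟨g, rfl⟩
    simp only [sec, dif_pos hv]
    exact hv.choose_spec
  set g' := sec (I g) with hg'
  -- extract pattern equality
  have hlt : ∀ s ∈ F, ∀ t ∈ F, (t < g • s ↔ t < g' • s) := by
    intro s hs t ht
    have := congrFun (congrArg Prod.fst (congrFun hIsec ⟨s, hs⟩)) ⟨t, ht⟩
    simpa [I, decide_eq_decide] using this.symm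
  have hmem : ∀ s ∈ F, (g • s ∈ F ↔ g' • s ∈ F) := by
    intro s hs
    have := congrArg Prod.snd (congrFun hIsec ⟨s, hs⟩)
    simpa [I, decide_eq_decide] using this.symm
  obtain ⟨hh, hhF, hhg⟩ := ultra_key h F g g' hlt hmem
  refine Set.mem_mul.2 ⟨hh, hhF, g' * (g'⁻¹ * hh⁻¹ * g), ?_, ?_⟩
  · refine Set.mem_mul.2 ⟨g', ?_, g'⁻¹ * hh⁻¹ * g, ?_, rfl⟩
    · exact Finset.mem_coe.2 (Finset.mem_image_of_mem _ (Finset.mem_univ _))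
    · intro s hs
      have h1 : hh • (g' • s) = g • s := hhg s hs
      have h2 : hh⁻¹ • (g • s) = g' • s := by rw [← h1, inv_smul_smul]
      calc (g'⁻¹ * hh⁻¹ * g) • s = g'⁻¹ • hh⁻¹ • g • s := by rw [mul_smul, mul_smul]
        _ = s := by rw [h2, inv_smul_smul]
  · group
end

section
/- Let a group G act ultrahomogeneously on an infinite circularly ordered set X. Then for every finite subset F ⊆ X there exists a finite set E ⊆ G such that G = U_F · E · U_F, where U_F = { g ∈ G : g s = s for all s ∈ F } is the pointwise stabilizer of F; equivalently, there are only finitely many double cosets U_F g U_F in G. (This expresses that G, in its topology of pointwise convergence on the discrete set X, is Roelcke precompact.) -/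
open Pointwise

/-- Auxiliary: embedding of `F ⊕ F` into `X` sending the left copy to `F` and the right
copy to `g • F`. -/
def stmt14.emb {G X : Type*} [Group G] [MulAction G X] (F : Finset X) (g : G) :
    ({x // x ∈ F} ⊕ {x // x ∈ F}) → X
  | Sum.inl s => (s : X)
  | Sum.inr s => g • (s : X)

/-- If a group `G` acts ultrahomogeneously on an infinite circularly ordered set `X`, then
for every finite `F ⊆ X` there is a finite `E ⊆ G` with `G = U_F · E · U_F`, where `U_F`
is the pointwise stabilizer of `F`: there are only finitely many double cosets
`U_F g U_F` (Roelcke precompactness of `G` in the pointwise topology). -/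
theorem stmt14 {G X : Type*} [Group G] [CircularOrder X] [MulAction G X] [Infinite X]
    (h : IsUltrahomogeneous G X) (F : Finset X) :
    ∃ E : Finset G, (Set.univ : Set G) ⊆
      {g : G | ∀ s ∈ F, g • s = s} * ((↑E : Set G) * {g : G | ∀ s ∈ F, g • s = s}) := by
  classical
  obtain ⟨heff, hpres, hext⟩ := h
  set U : Set G := {g : G | ∀ s ∈ F, g • s = s} with hU
  let e : G → ({x // x ∈ F} ⊕ {x // x ∈ F}) → X := stmt14.emb F
  let T : G → ((({x // x ∈ F} ⊕ {x // x ∈ F}) → ({x // x ∈ F} ⊕ {x // x ∈ F}) →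
      ({x // x ∈ F} ⊕ {x // x ∈ F}) → Prop) ×
      (({x // x ∈ F} ⊕ {x // x ∈ F}) → ({x // x ∈ F} ⊕ {x // x ∈ F}) → Prop)) :=
    fun g => (fun i j k => sbtw (e g i) (e g j) (e g k), fun i j => e g i = e g j)
  have key : ∀ g g' : G, T g = T g' → ∃ u v : G, u ∈ U ∧ v ∈ U ∧ g' = u * g * v := by
    intro g g' hT
    have heq : ∀ i j, e g i = e g j ↔ e g' i = e g' j := fun i j =>
      iff_of_eq (congrFun (congrFun (congrArg Prod.snd hT) i) j)
    have hsb : ∀ i j k, sbtw (e g i) (e g j) (e g k) ↔ sbtw (e g' i) (e g' j) (e g' k) :=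
      fun i j k => iff_of_eq (congrFun (congrFun (congrFun (congrArg Prod.fst hT) i) j) k)
    set A : Finset X := F ∪ F.image (fun s => g • s) with hAdef
    set B : Finset X := F ∪ F.image (fun s => g' • s) with hBdef
    have hA : ∀ x, x ∈ A ↔ ∃ i, e g i = x := by
      intro x
      rw [hAdef]
      simp only [Finset.mem_union, Finset.mem_image]
      constructor
      · rintro (hx | ⟨s, hs, rfl⟩)
        · exact ⟨Sum.inl ⟨x, hx⟩, rfl⟩
        · exact ⟨Sum.inr ⟨s, hs⟩, rfl⟩
      · rintro ⟨(⟨s, hs⟩ | ⟨s, hs⟩), rfl⟩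
        · exact Or.inl hs
        · exact Or.inr ⟨s, hs, rfl⟩
    have hB : ∀ x, x ∈ B ↔ ∃ i, e g' i = x := by
      intro x
      rw [hBdef]
      simp only [Finset.mem_union, Finset.mem_image]
      constructor
      · rintro (hx | ⟨s, hs, rfl⟩)
        · exact ⟨Sum.inl ⟨x, hx⟩, rfl⟩
        · exact ⟨Sum.inr ⟨s, hs⟩, rfl⟩
      · rintro ⟨(⟨s, hs⟩ | ⟨s, hs⟩), rfl⟩
        · exact Or.inl hs
        · exact Or.inr ⟨s, hs, rfl⟩
    set φ : X → X := fun x => if hx : ∃ i, e g i = x then e g' hx.choose else x with hφdef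
    have hφ : ∀ i, φ (e g i) = e g' i := by
      intro i
      have hx : ∃ j, e g j = e g i := ⟨i, rfl⟩
      rw [hφdef]
      simp only [dif_pos hx]
      exact (heq _ _).mp hx.choose_spec
    have hbij : Set.BijOn φ (↑A : Set X) (↑B : Set X) := by
      refine ⟨?_, ?_, ?_⟩
      · intro x hx
        obtain ⟨i, rfl⟩ := (hA x).mp hx
        rw [hφ]
        exact_mod_cast (hB _).mpr ⟨i, rfl⟩
      · intro x hx y hy hxy
        obtain ⟨i, rfl⟩ := (hA x).mp hx
        obtain ⟨j, rfl⟩ := (hA y).mp hy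
        rw [hφ i, hφ j] at hxy
        exact (heq i j).mpr hxy
      · intro y hy
        obtain ⟨i, rfl⟩ := (hB y).mp hy
        exact ⟨e g i, by exact_mod_cast (hA _).mpr ⟨i, rfl⟩, hφ i⟩
    have hsbφ : ∀ a ∈ A, ∀ b ∈ A, ∀ c ∈ A, (sbtw a b c ↔ sbtw (φ a) (φ b) (φ c)) := by
      intro a ha b hb c hc
      obtain ⟨i, rfl⟩ := (hA a).mp ha
      obtain ⟨j, rfl⟩ := (hA b).mp hb
      obtain ⟨k, rfl⟩ := (hA c).mp hc
      rw [hφ i, hφ j, hφ k]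
      exact hsb i j k
    obtain ⟨u, hu⟩ := hext A B φ hbij hsbφ
    have huF : ∀ s ∈ F, u • s = s := by
      intro s hs
      have hsA : s ∈ A := (hA _).mpr ⟨Sum.inl ⟨s, hs⟩, rfl⟩
      rw [hu s hsA]
      exact hφ (Sum.inl ⟨s, hs⟩)
    have hug : ∀ s ∈ F, u • (g • s) = g' • s := by
      intro s hs
      have hsA : g • s ∈ A := (hA _).mpr ⟨Sum.inr ⟨s, hs⟩, rfl⟩
      rw [hu _ hsA]
      exact hφ (Sum.inr ⟨s, hs⟩)
    refine ⟨u, g⁻¹ * u⁻¹ * g', huF, ?_, by group⟩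
    intro s hs
    simp only [mul_smul]
    rw [← hug s hs, inv_smul_smul, inv_smul_smul]
  haveI h1 : Fintype (({x // x ∈ F} ⊕ {x // x ∈ F}) → ({x // x ∈ F} ⊕ {x // x ∈ F}) → Prop) :=
    inferInstance
  haveI h2 : Fintype (({x // x ∈ F} ⊕ {x // x ∈ F}) → ({x // x ∈ F} ⊕ {x // x ∈ F}) →
      ({x // x ∈ F} ⊕ {x // x ∈ F}) → Prop) := inferInstance
  haveI h3 := @instFintypeProd _ _ h2 h1
  let rep : ((({x // x ∈ F} ⊕ {x // x ∈ F}) → ({x // x ∈ F} ⊕ {x // x ∈ F}) →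
      ({x // x ∈ F} ⊕ {x // x ∈ F}) → Prop) ×
      (({x // x ∈ F} ⊕ {x // x ∈ F}) → ({x // x ∈ F} ⊕ {x // x ∈ F}) → Prop)) → G :=
    fun d => if hd : ∃ g, T g = d then hd.choose else 1
  refine ⟨Finset.image rep Finset.univ, ?_⟩
  intro g' _
  have hd : ∃ g, T g = T g' := ⟨g', rfl⟩
  have hrep : T (rep (T g')) = T g' := by
    simp only [rep, dif_pos hd]
    exact hd.choose_spec
  obtain ⟨u, v, hu, hv, hgv⟩ := key (rep (T g')) g' hrep
  have hmem : u * (rep (T g') * v) ∈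
      U * ((↑(Finset.image rep Finset.univ) : Set G) * U) :=
    Set.mul_mem_mul hu (Set.mul_mem_mul
      (by simp only [Finset.coe_image, Finset.coe_univ, Set.image_univ, Set.mem_range];
          exact ⟨T g', rfl⟩) hv)
  rw [mul_assoc] at hgv
  rw [hgv]
  exact hmem
end

section
/- The set ℚ_∘ = ℚ/ℤ of rational points of the circle (in Lean, `AddCircle (1 : ℚ)` with its circular order, whose strict betweenness relation is `sbtw`) is an ultrahomogeneous circularly ordered set: every c-order isomorphism between two finite subsets A, B of ℚ/ℤ (a bijection φ : A → B such that sbtw a b c iff sbtw (φ a) (φ b) (φ c) for all a,b,c ∈ A) extends to a bijection of ℚ/ℤ onto itself preserving the circular order. -/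
instance : Fact ((0 : ℚ) < 1) := ⟨one_pos⟩

/-- `ℚ_∘ = ℚ/ℤ`, the rational points of the circle, with its circular order. -/
abbrev QCirc : Type := AddCircle (1 : ℚ)

open Set Function

namespace Pf

noncomputable def rep (q : QCirc) : ℚ :=
  (QuotientAddGroup.equivIcoMod (zero_lt_one (α := ℚ)) 0 q : ℚ)

lemma rep_coe (x : ℚ) : rep (x : QCirc) = toIcoMod (zero_lt_one (α := ℚ)) 0 x := rfl

lemma rep_mem (q : QCirc) : rep q ∈ Set.Ico (0:ℚ) 1 := by
  have := (QuotientAddGroup.equivIcoMod (zero_lt_one (α := ℚ)) 0 q).2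
  simpa [rep] using this

lemma coe_rep (q : QCirc) : ((rep q : ℚ) : QCirc) = q :=
  (QuotientAddGroup.equivIcoMod (zero_lt_one (α := ℚ)) 0).symm_apply_apply q

lemma rep_zero : rep (0 : QCirc) = 0 := by
  have : ((0:ℚ) : QCirc) = 0 := by simp
  rw [← this, rep_coe]
  simpa using (toIcoMod_eq_iff (zero_lt_one (α := ℚ))).2 ⟨by simp, 0, by simp⟩

lemma rep_eq_zero_iff {q : QCirc} : rep q = 0 ↔ q = 0 := by
  constructor
  · intro h
    have := coe_rep q
    rw [h] at this
    simpa using this.symm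
  · rintro rfl; exact rep_zero

def intEquiv (F : ℚ → ℚ) : Prop := ∀ (x : ℚ) (z : ℤ), F (x + z) = F x + z

noncomputable def qmap (F : ℚ → ℚ) : QCirc → QCirc := fun q => ((F (rep q) : ℚ) : QCirc)

lemma qmap_coe {F : ℚ → ℚ} (hF : intEquiv F) (x : ℚ) : qmap F (x : QCirc) = ((F x : ℚ) : QCirc) := by
  unfold qmap
  rw [QuotientAddGroup.eq, rep_coe]
  set m := toIcoMod (zero_lt_one (α := ℚ)) 0 x with hm
  obtain ⟨z, hz⟩ : ∃ z : ℤ, x = m + z := by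
    have h := toIcoMod_add_toIcoDiv_zsmul (zero_lt_one (α := ℚ)) 0 x
    exact ⟨toIcoDiv (zero_lt_one (α := ℚ)) 0 x, by simp [zsmul_eq_mul] at h; linarith⟩
  have hFx : F x = F m + z := by
    calc F x = F (m + z) := by rw [← hz]
    _ = F m + z := hF m z
  refine AddSubgroup.mem_zmultiples_iff.2 ⟨z, ?_⟩
  rw [hFx]; push_cast [zsmul_eq_mul]; ring


lemma toIcoMod_map {F : ℚ → ℚ} (hm : StrictMono F) (hF : intEquiv F) (a b : ℚ) :
    toIcoMod (zero_lt_one (α := ℚ)) (F a) (F b) = F (toIcoMod (zero_lt_one (α := ℚ)) a b) := by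
  obtain ⟨h1, h2⟩ := toIcoMod_mem_Ico (zero_lt_one (α := ℚ)) a b
  refine (toIcoMod_eq_iff _).2 ⟨⟨hm.monotone h1, ?_⟩, ?_⟩
  · have := hm h2
    have e : F (a + 1) = F a + 1 := by
      have := hF a 1; push_cast at this; exact this
    rw [e] at this; exact this
  · refine ⟨toIcoDiv (zero_lt_one (α := ℚ)) a b, ?_⟩
    have h := toIcoMod_add_toIcoDiv_zsmul (zero_lt_one (α := ℚ)) a b
    set d := toIcoDiv (zero_lt_one (α := ℚ)) a b
    have : b = toIcoMod (zero_lt_one (α := ℚ)) a b + (d : ℚ) := by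
      simp [zsmul_eq_mul] at h; linarith
    calc F b = F (toIcoMod (zero_lt_one (α := ℚ)) a b) + (d:ℚ) := by
          conv_lhs => rw [this]
          exact hF _ d
    _ = _ := by simp [zsmul_eq_mul]
lemma toIocMod_map {F : ℚ → ℚ} (hm : StrictMono F) (hF : intEquiv F) (a b : ℚ) :
    toIocMod (zero_lt_one (α := ℚ)) (F a) (F b) = F (toIocMod (zero_lt_one (α := ℚ)) a b) := by
  obtain ⟨h1, h2⟩ := toIocMod_mem_Ioc (zero_lt_one (α := ℚ)) a b
  refine (toIocMod_eq_iff _).2 ⟨⟨hm h1, ?_⟩, ?_⟩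
  · have := hm.monotone h2
    have e : F (a + 1) = F a + 1 := by
      have := hF a 1; push_cast at this; exact this
    rw [e] at this; exact this
  · refine ⟨toIocDiv (zero_lt_one (α := ℚ)) a b, ?_⟩
    have h := toIocMod_add_toIocDiv_zsmul (zero_lt_one (α := ℚ)) a b
    set d := toIocDiv (zero_lt_one (α := ℚ)) a b
    have : b = toIocMod (zero_lt_one (α := ℚ)) a b + (d : ℚ) := by
      simp [zsmul_eq_mul] at h; linarith
    calc F b = F (toIocMod (zero_lt_one (α := ℚ)) a b) + (d:ℚ) := by
          conv_lhs => rw [this]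
          exact hF _ d
    _ = _ := by simp [zsmul_eq_mul]

lemma qmap_btw {F : ℚ → ℚ} (hm : StrictMono F) (hF : intEquiv F) {a b c : QCirc}
    (h : btw a b c) : btw (qmap F a) (qmap F b) (qmap F c) := by
  induction a using QuotientAddGroup.induction_on with | H a => ?_
  induction b using QuotientAddGroup.induction_on with | H b => ?_
  induction c using QuotientAddGroup.induction_on with | H c => ?_
  rw [qmap_coe hF, qmap_coe hF, qmap_coe hF]
  rw [QuotientAddGroup.btw_coe_iff] at h ⊢
  rw [toIcoMod_map hm hF, toIocMod_map hm hF]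
  exact hm.monotone h

structure GoodMap where
  F : ℚ → ℚ
  K : ℚ → ℚ
  mF : StrictMono F
  mK : StrictMono K
  eF : intEquiv F
  eK : intEquiv K
  inv1 : ∀ t, K (F t) = t
  inv2 : ∀ t, F (K t) = t

lemma GoodMap.leftInv (G : GoodMap) (q : QCirc) : qmap G.K (qmap G.F q) = q := by
  show qmap G.K ((G.F (rep q) : ℚ) : QCirc) = q
  rw [qmap_coe G.eK, G.inv1, coe_rep]

def GoodMap.symm (G : GoodMap) : GoodMap :=
  ⟨G.K, G.F, G.mK, G.mF, G.eK, G.eF, G.inv2, G.inv1⟩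

lemma GoodMap.bij (G : GoodMap) : Function.Bijective (qmap G.F) :=
  Function.bijective_iff_has_inverse.2 ⟨qmap G.K, G.leftInv, G.symm.leftInv⟩

lemma GoodMap.sbtw_map (G : GoodMap) {a b c : QCirc} (h : sbtw a b c) :
    sbtw (qmap G.F a) (qmap G.F b) (qmap G.F c) := by
  rw [sbtw_iff_not_btw] at h ⊢
  intro hb
  apply h
  have := qmap_btw G.mK G.eK hb
  rwa [G.leftInv, G.leftInv, G.leftInv] at this

lemma GoodMap.sbtw_iff (G : GoodMap) {a b c : QCirc} :
    sbtw (qmap G.F a) (qmap G.F b) (qmap G.F c) ↔ sbtw a b c := by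
  refine ⟨fun h => ?_, G.sbtw_map⟩
  have := G.symm.sbtw_map h
  rwa [show qmap G.symm.F = qmap G.K from rfl, G.leftInv, G.leftInv, G.leftInv] at this

def GoodMap.trans (w : ℚ) : GoodMap where
  F := (· + w)
  K := (· + (-w))
  mF := fun a b h => by simpa using h
  mK := fun a b h => by simpa using h
  eF := fun x z => by ring
  eK := fun x z => by ring
  inv1 := fun t => by ring
  inv2 := fun t => by ring

lemma sbtw_zero_iff {q q' : QCirc} (hq : q ≠ 0) (hq' : q' ≠ 0) :
    sbtw (0 : QCirc) q q' ↔ rep q < rep q' := by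
  have hq0 : 0 < rep q := lt_of_le_of_ne (rep_mem q).1 (fun h => hq (rep_eq_zero_iff.1 h.symm))
  have hq'0 : 0 < rep q' := lt_of_le_of_ne (rep_mem q').1 (fun h => hq' (rep_eq_zero_iff.1 h.symm))
  have hq1 : rep q < 1 := (rep_mem q).2
  have hq'1 : rep q' < 1 := (rep_mem q').2
  have key : ∀ x y : ℚ, 0 < x → x < 1 → 0 < y → y < 1 →
      (sbtw (0 : QCirc) ((x : ℚ) : QCirc) ((y : ℚ) : QCirc) ↔ x < y) := by
    intro x y hx0 hx1 hy0 hy1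
    rw [sbtw_iff_not_btw, ← show (((0:ℚ) : QCirc)) = 0 by simp, QuotientAddGroup.btw_coe_iff]
    have hIoc : toIocMod (zero_lt_one (α := ℚ)) y 0 = 1 :=
      (toIocMod_eq_iff _).2 ⟨⟨hy1, by linarith⟩, -1, by simp⟩
    rw [hIoc]
    by_cases hle : y ≤ x
    · have h2 : toIcoMod (zero_lt_one (α := ℚ)) y x = x :=
        (toIcoMod_eq_iff _).2 ⟨⟨hle, by linarith⟩, 0, by simp⟩
      rw [h2]
      exact ⟨fun h => absurd hx1.le h, fun h => absurd h (not_lt.2 hle)⟩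
    · push_neg at hle
      have h2 : toIcoMod (zero_lt_one (α := ℚ)) y x = x + 1 :=
        (toIcoMod_eq_iff _).2 ⟨⟨by linarith, by linarith⟩, -1, by push_cast [zsmul_eq_mul]; ring⟩
      rw [h2]
      exact ⟨fun _ => hle, fun _ h => by linarith⟩
  rw [← key (rep q) (rep q') hq0 hq1 hq'0 hq'1, coe_rep, coe_rep]


noncomputable def wrap (f : ℚ → ℚ) : ℚ → ℚ := fun t => f (Int.fract t) + ⌊t⌋

section Wrap
variable {f : ℚ → ℚ} (hf : StrictMono f) (h0 : f 0 = 0) (h1 : f 1 = 1)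

include hf h0 h1

lemma wrap_mem (t : ℚ) : 0 ≤ f (Int.fract t) ∧ f (Int.fract t) < 1 :=
  ⟨h0 ▸ hf.monotone (Int.fract_nonneg t), h1 ▸ hf (Int.fract_lt_one t)⟩

lemma wrap_intEquiv : intEquiv (wrap f) := by
  intro x z
  unfold wrap
  rw [Int.fract_add_intCast, Int.floor_add_intCast]
  push_cast
  ring

lemma wrap_eq {t : ℚ} (ht0 : 0 ≤ t) (ht1 : t < 1) : wrap f t = f t := by
  unfold wrap
  rw [Int.fract_eq_self.2 ⟨ht0, ht1⟩, Int.floor_eq_zero_iff.2 ⟨ht0, ht1⟩]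
  simp

lemma wrap_mono : StrictMono (wrap f) := by
  intro t s hts
  unfold wrap
  rcases eq_or_lt_of_le (Int.floor_le_floor hts.le) with heq | hlt
  · have hf1 : Int.fract t < Int.fract s := by
      unfold Int.fract; rw [heq] at *; exact sub_lt_sub_right hts _
    have := hf hf1
    rw [heq]; linarith
  · obtain ⟨hA, hB⟩ := wrap_mem hf h0 h1 t
    obtain ⟨hC, _⟩ := wrap_mem hf h0 h1 s
    have : (⌊t⌋ : ℚ) + 1 ≤ (⌊s⌋ : ℚ) := by exact_mod_cast hlt
    linarith

end Wrap

lemma wrap_leftInv {f k : ℚ → ℚ} (hf : StrictMono f) (h0 : f 0 = 0) (h1 : f 1 = 1)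
    (hkf : ∀ t, k (f t) = t) (t : ℚ) : wrap k (wrap f t) = t := by
  have hmem := wrap_mem hf h0 h1 t
  show k (Int.fract (f (Int.fract t) + ⌊t⌋)) + (⌊(f (Int.fract t) + (⌊t⌋:ℚ))⌋ : ℚ) = t
  rw [Int.fract_add_intCast, Int.floor_add_intCast, Int.fract_eq_self.2 ⟨hmem.1, hmem.2⟩,
    Int.floor_eq_zero_iff.2 ⟨hmem.1, hmem.2⟩, hkf]
  rw [zero_add]
  exact Int.fract_add_floor t

-- piecewise-linear building block
noncomputable def pw (c k : ℚ) (t : ℚ) : ℚ := if c ≤ t then t else c + (t - c) * k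

lemma pw_mono {c k : ℚ} (hk : 0 < k) : StrictMono (pw c k) := by
  intro a b hab
  unfold pw
  by_cases ha : c ≤ a
  · rw [if_pos ha, if_pos (ha.trans hab.le)]; exact hab
  · push_neg at ha
    rw [if_neg (not_le.2 ha)]
    by_cases hb : c ≤ b
    · rw [if_pos hb]
      have : (a - c) * k < 0 := mul_neg_of_neg_of_pos (by linarith) hk
      linarith
    · push_neg at hb
      rw [if_neg (not_le.2 hb)]
      have : (a - c) * k < (b - c) * k := by
        apply mul_lt_mul_of_pos_right _ hk; linarith
      linarith

lemma pw_surj {c k : ℚ} (hk : 0 < k) : Function.Surjective (pw c k) := by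
  intro z
  by_cases hz : c ≤ z
  · exact ⟨z, by rw [pw, if_pos hz]⟩
  · push_neg at hz
    refine ⟨c + (z - c) / k, ?_⟩
    have hneg : (z - c) / k < 0 := div_neg_of_neg_of_pos (by linarith) hk
    rw [pw, if_neg (by linarith)]
    field_simp
    ring

lemma pw_bij {c k : ℚ} (hk : 0 < k) : Function.Bijective (pw c k) :=
  ⟨(pw_mono hk).injective, pw_surj hk⟩


lemma interp : ∀ (n : ℕ) {ι : Type} (t : Finset ι) (u v : ι → ℚ),
    t.card ≤ n →
    (∀ a ∈ t, ∀ b ∈ t, u a < u b → v a < v b) →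
    (∀ a ∈ t, ∀ b ∈ t, u a = u b → v a = v b) →
    ∃ f : ℚ → ℚ, StrictMono f ∧ Function.Bijective f ∧ ∀ a ∈ t, f (u a) = v a := by
  intro n
  induction n with
  | zero =>
    intro ι t u v hcard _ _
    have : t = ∅ := Finset.card_eq_zero.1 (Nat.le_zero.1 hcard)
    subst this
    exact ⟨id, strictMono_id, Function.bijective_id, by simp⟩
  | succ n ih =>
    intro ι t u v hcard hmono heq
    rcases t.eq_empty_or_nonempty with rfl | ht
    · exact ⟨id, strictMono_id, Function.bijective_id, by simp⟩
    classical
    obtain ⟨a₀, ha₀, hmin⟩ := t.exists_min_image u ht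
    set t' := t.filter (fun a => u a ≠ u a₀) with ht'
    have ht'sub : t' ⊆ t := Finset.filter_subset _ _
    have ha₀not : a₀ ∉ t' := by simp [ht']
    have hcard' : t'.card ≤ n := by
      have h1 : t'.card < t.card := Finset.card_lt_card ⟨ht'sub, fun hsub => ha₀not (hsub ha₀)⟩
      omega
    have hlt : ∀ a ∈ t', u a₀ < u a := fun a ha =>
      lt_of_le_of_ne (hmin a (ht'sub ha)) (Ne.symm (Finset.mem_filter.1 ha).2)
    obtain ⟨f', hm', hb', hf'⟩ := ih t' u v hcard'
      (fun a ha b hb => hmono a (ht'sub ha) b (ht'sub hb))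
      (fun a ha b hb => heq a (ht'sub ha) b (ht'sub hb))
    set S : Finset ℚ :=
      insert (max (v a₀) (f' (u a₀)) + 1) (t'.image fun a => min (v a) (f' (u a))) with hS
    have hSne : S.Nonempty := ⟨_, Finset.mem_insert_self _ _⟩
    set c : ℚ := S.min' hSne with hc
    have hv_lt : ∀ a ∈ t', v a₀ < v a := fun a ha => hmono a₀ ha₀ a (ht'sub ha) (hlt a ha)
    have hfv : ∀ a ∈ t', f' (u a) = v a := hf'
    have hf'_lt : ∀ a ∈ t', f' (u a₀) < f' (u a) := fun a ha => hm' (hlt a ha)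
    have hboth : ∀ y ∈ S, v a₀ < y ∧ f' (u a₀) < y := by
      intro y hy
      rcases Finset.mem_insert.1 hy with rfl | hy
      · constructor
        · have := le_max_left (v a₀) (f' (u a₀)); linarith
        · have := le_max_right (v a₀) (f' (u a₀)); linarith
      · obtain ⟨a, ha, rfl⟩ := Finset.mem_image.1 hy
        have h1 := hv_lt a ha
        have h2 := hf'_lt a ha
        have h3 := hfv a ha
        constructor
        · exact lt_min h1 (by rw [h3]; exact h1)
        · exact lt_min (by rw [← h3]; exact h2) h2
    have hc1 : v a₀ < c := (Finset.lt_min'_iff S hSne).2 (fun y hy => (hboth y hy).1)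
    have hc2 : f' (u a₀) < c := (Finset.lt_min'_iff S hSne).2 (fun y hy => (hboth y hy).2)
    have hc3 : ∀ a ∈ t', c ≤ v a ∧ c ≤ f' (u a) := by
      intro a ha
      have hmem : min (v a) (f' (u a)) ∈ S :=
        Finset.mem_insert_of_mem (Finset.mem_image_of_mem _ ha)
      have h := S.min'_le _ hmem
      exact ⟨h.trans (min_le_left _ _), h.trans (min_le_right _ _)⟩
    have hkpos : (0:ℚ) < (c - v a₀) / (c - f' (u a₀)) := div_pos (by linarith) (by linarith)
    refine ⟨pw c ((c - v a₀) / (c - f' (u a₀))) ∘ f', (pw_mono hkpos).comp hm',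
      (pw_bij hkpos).comp hb', ?_⟩
    intro a ha
    by_cases hau : u a = u a₀
    · have hva : v a = v a₀ := heq a ha a₀ ha₀ hau
      rw [Function.comp_apply, hau, hva, pw, if_neg (not_le.2 hc2)]
      have hne : c - f' (u a₀) ≠ 0 := by linarith
      field_simp
      ring
    · have ha' : a ∈ t' := Finset.mem_filter.2 ⟨ha, hau⟩
      rw [Function.comp_apply, pw, if_pos (hc3 a ha').2, hfv a ha']


lemma exists_inverse {f : ℚ → ℚ} (hm : StrictMono f) (hb : Function.Bijective f)
    (h0 : f 0 = 0) (h1 : f 1 = 1) :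
    ∃ k : ℚ → ℚ, StrictMono k ∧ (∀ t, k (f t) = t) ∧ (∀ t, f (k t) = t) ∧ k 0 = 0 ∧ k 1 = 1 := by
  set k := Function.surjInv hb.surjective with hk
  have hfk : ∀ t, f (k t) = t := fun t => Function.surjInv_eq hb.surjective t
  have hkf : ∀ t, k (f t) = t := fun t => hb.injective (by rw [hfk])
  have hmk : StrictMono k := by
    intro a b hab
    by_contra h
    push_neg at h
    have h2 := hm.monotone h
    rw [hfk, hfk] at h2
    linarith
  refine ⟨k, hmk, hkf, hfk, ?_, ?_⟩
  · conv_lhs => rw [← h0]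
    exact hkf 0
  · conv_lhs => rw [← h1]
    exact hkf 1

end Pf


open Pf

/-- `ℚ/ℤ` is an ultrahomogeneous circularly ordered set: every c-order isomorphism
between two finite subsets extends to a c-order preserving bijection of `ℚ/ℤ`. -/
theorem stmt15 :
    ∀ (A B : Finset QCirc) (φ : QCirc → QCirc),
      Set.BijOn φ (↑A : Set QCirc) (↑B : Set QCirc) →
      (∀ a ∈ A, ∀ b ∈ A, ∀ c ∈ A, (sbtw a b c ↔ sbtw (φ a) (φ b) (φ c))) →
      ∃ g : QCirc → QCirc, Function.Bijective g ∧
        (∀ a b c : QCirc, sbtw a b c → sbtw (g a) (g b) (g c)) ∧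
        ∀ a ∈ A, g a = φ a := by
  classical
  intro A B φ hbij hiff
  rcases A.eq_empty_or_nonempty with rfl | ⟨x₀, hx₀⟩
  · exact ⟨id, Function.bijective_id, fun a b c h => h, by simp⟩
  have hinj : Set.InjOn φ (↑A : Set QCirc) := hbij.injOn
  set u : QCirc → ℚ := fun a => rep (a - x₀) with hu
  set v : QCirc → ℚ := fun a => rep (φ a - φ x₀) with hv
  have hcu : ∀ a : QCirc, ((u a : ℚ) : QCirc) = a - x₀ := fun a => coe_rep _
  have hcv : ∀ a : QCirc, ((v a : ℚ) : QCirc) = φ a - φ x₀ := fun a => coe_rep _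
  have hu0 : u x₀ = 0 := by show rep (x₀ - x₀) = 0; rw [sub_self, rep_zero]
  have hv0 : v x₀ = 0 := by show rep (φ x₀ - φ x₀) = 0; rw [sub_self, rep_zero]
  have humem : ∀ a, u a ∈ Set.Ico (0:ℚ) 1 := fun a => rep_mem _
  have hvmem : ∀ a, v a ∈ Set.Ico (0:ℚ) 1 := fun a => rep_mem _
  have huinj : ∀ a b, u a = u b → a = b := by
    intro a b h
    have h2 : a - x₀ = b - x₀ := by rw [← hcu a, ← hcu b, h]
    exact sub_left_inj.1 h2
  have hphine : ∀ a ∈ A, a ≠ x₀ → φ a ≠ φ x₀ := by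
    intro a ha hne h
    exact hne (hinj (by exact_mod_cast ha) (by exact_mod_cast hx₀) h)
  have hvne : ∀ a ∈ A, a ≠ x₀ → v a ≠ 0 := by
    intro a ha hne h0'
    have h2 : φ a - φ x₀ = 0 := by rw [← hcv a, h0']; simp
    exact hphine a ha hne (sub_eq_zero.1 h2)
  have hune : ∀ a, a ≠ x₀ → u a ≠ 0 := by
    intro a hne h0'
    exact hne (huinj a x₀ (by rw [h0', hu0]))
  -- translation good maps
  set G₁ : GoodMap := GoodMap.trans (-(rep x₀)) with hG₁
  set G₁' : GoodMap := GoodMap.trans (-(rep (φ x₀))) with hG₁'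
  set G₃ : GoodMap := GoodMap.trans (rep (φ x₀)) with hG₃
  have hq1 : ∀ q : QCirc, qmap G₁.F q = q - x₀ := by
    intro q
    conv_lhs => rw [← coe_rep q]
    rw [qmap_coe G₁.eF]
    show ((rep q + (-(rep x₀)) : ℚ) : QCirc) = q - x₀
    rw [show (rep q + (-(rep x₀)) : ℚ) = rep q - rep x₀ by ring]
    rw [QuotientAddGroup.mk_sub, coe_rep, coe_rep]
  have hq1' : ∀ q : QCirc, qmap G₁'.F q = q - φ x₀ := by
    intro q
    conv_lhs => rw [← coe_rep q]
    rw [qmap_coe G₁'.eF]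
    show ((rep q + (-(rep (φ x₀))) : ℚ) : QCirc) = q - φ x₀
    rw [show (rep q + (-(rep (φ x₀))) : ℚ) = rep q - rep (φ x₀) by ring]
    rw [QuotientAddGroup.mk_sub, coe_rep, coe_rep]
  have hq3 : ∀ q : QCirc, qmap G₃.F q = q + φ x₀ := by
    intro q
    conv_lhs => rw [← coe_rep q]
    rw [qmap_coe G₃.eF]
    show ((rep q + rep (φ x₀) : ℚ) : QCirc) = q + φ x₀
    rw [QuotientAddGroup.mk_add, coe_rep, coe_rep]
  have key1 : ∀ a b : QCirc, a ≠ x₀ → b ≠ x₀ → (sbtw x₀ a b ↔ u a < u b) := by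
    intro a b ha hb
    have h := G₁.sbtw_iff (a := x₀) (b := a) (c := b)
    rw [hq1, hq1, hq1, sub_self] at h
    rw [← h]
    exact sbtw_zero_iff (sub_ne_zero.2 ha) (sub_ne_zero.2 hb)
  have key2 : ∀ a b : QCirc, φ a ≠ φ x₀ → φ b ≠ φ x₀ →
      (sbtw (φ x₀) (φ a) (φ b) ↔ v a < v b) := by
    intro a b ha hb
    have h := G₁'.sbtw_iff (a := φ x₀) (b := φ a) (c := φ b)
    rw [hq1', hq1', hq1', sub_self] at h
    rw [← h]
    exact sbtw_zero_iff (sub_ne_zero.2 ha) (sub_ne_zero.2 hb)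
  -- the finite interpolation data
  set t : Finset (Option QCirc) := insert none (A.image some) with htdef
  set U : Option QCirc → ℚ := fun o => o.elim 1 u with hU
  set V : Option QCirc → ℚ := fun o => o.elim 1 v with hV
  have hmem_some : ∀ a ∈ A, some a ∈ t :=
    fun a ha => Finset.mem_insert_of_mem (Finset.mem_image_of_mem _ ha)
  have hmem_inv : ∀ a : QCirc, some a ∈ t → a ∈ A := by
    intro a ha
    rcases Finset.mem_insert.1 ha with h | h
    · exact absurd h (by simp)
    · obtain ⟨b, hb, hba⟩ := Finset.mem_image.1 h
      rwa [← Option.some_inj.1 hba]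
  have hmono' : ∀ o ∈ t, ∀ o' ∈ t, U o < U o' → V o < V o' := by
    rintro (_ | a) ho (_ | b) ho' hlt
    · exact absurd hlt (lt_irrefl _)
    · exact absurd hlt (not_lt.2 (humem b).2.le)
    · show v a < 1
      exact (hvmem a).2
    · show v a < v b
      have ha : a ∈ A := hmem_inv a ho
      have hb : b ∈ A := hmem_inv b ho'
      replace hlt : u a < u b := hlt
      by_cases hax : a = x₀
      · rw [hax, hu0] at hlt
        have hbx : b ≠ x₀ := by
          intro h
          rw [h, hu0] at hlt
          exact lt_irrefl _ hlt
        rw [hax, hv0]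
        exact lt_of_le_of_ne (hvmem b).1 (Ne.symm (hvne b hb hbx))
      · by_cases hbx : b = x₀
        · rw [hbx, hu0] at hlt
          exact absurd hlt (not_lt.2 (humem a).1)
        · have h1 : sbtw x₀ a b := (key1 a b hax hbx).2 hlt
          have h2 : sbtw (φ x₀) (φ a) (φ b) := (hiff x₀ hx₀ a ha b hb).1 h1
          exact (key2 a b (hphine a ha hax) (hphine b hb hbx)).1 h2
  have heq' : ∀ o ∈ t, ∀ o' ∈ t, U o = U o' → V o = V o' := by
    rintro (_ | a) ho (_ | b) ho' heq
    · rfl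
    · exact absurd heq.symm (ne_of_lt (humem b).2)
    · exact absurd heq (ne_of_lt (humem a).2)
    · show v a = v b
      have : a = b := huinj a b heq
      rw [this]
  obtain ⟨f, hfm, hfb, hfn⟩ := interp t.card t U V le_rfl hmono' heq'
  have hf1 : f 1 = 1 := by
    have := hfn none (Finset.mem_insert_self _ _)
    exact this
  have hf0 : f 0 = 0 := by
    have := hfn (some x₀) (hmem_some x₀ hx₀)
    calc f 0 = f (u x₀) := by rw [hu0]
    _ = v x₀ := this
    _ = 0 := hv0
  obtain ⟨k, hkm, hkf, hfk, hk0, hk1⟩ := exists_inverse hfm hfb hf0 hf1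
  set G₂ : GoodMap := ⟨wrap f, wrap k, wrap_mono hfm hf0 hf1, wrap_mono hkm hk0 hk1,
    wrap_intEquiv hfm hf0 hf1, wrap_intEquiv hkm hk0 hk1,
    wrap_leftInv hfm hf0 hf1 hkf, wrap_leftInv hkm hk0 hk1 hfk⟩ with hG₂
  refine ⟨fun q => qmap G₃.F (qmap G₂.F (qmap G₁.F q)), ?_, ?_, ?_⟩
  · exact G₃.bij.comp (G₂.bij.comp G₁.bij)
  · intro a b c h
    exact G₃.sbtw_map (G₂.sbtw_map (G₁.sbtw_map h))
  · intro a ha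
    have h1 : qmap G₁.F a = ((u a : ℚ) : QCirc) := by rw [hq1]; exact (hcu a).symm
    have h2 : qmap G₂.F ((u a : ℚ) : QCirc) = ((v a : ℚ) : QCirc) := by
      rw [show G₂.F = wrap f from rfl, qmap_coe (wrap_intEquiv hfm hf0 hf1)]
      rw [wrap_eq hfm hf0 hf1 (humem a).1 (humem a).2]
      have := hfn (some a) (hmem_some a ha)
      rw [show U (some a) = u a from rfl, show V (some a) = v a from rfl] at this
      rw [this]
    have h3 : qmap G₃.F ((v a : ℚ) : QCirc) = φ a := by
      rw [hq3, hcv a]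
      abel
    show qmap G₃.F (qmap G₂.F (qmap G₁.F a)) = φ a
    rw [h1, h2, h3]
end

section
/- For every infinite cardinal τ there exists an ultrahomogeneous circularly ordered set of cardinality τ; that is, for every cardinal c with ℵ₀ ≤ c there exists a type X with a circular order such that #X = c and every c-order isomorphism between two finite subsets A, B of X (a bijection φ : A → B such that [a,b,c] iff [φ(a),φ(b),φ(c)] for all a,b,c ∈ A) extends to a c-order automorphism of X (a bijection of X preserving the circular order). -/
universe u

/-- A circularly ordered set is ultrahomogeneous if every c-order isomorphism between two
finite subsets extends to a c-order automorphism (a c-order preserving bijection). -/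
def CircUltrahomogeneous (X : Type*) [CircularOrder X] : Prop :=
  ∀ (A B : Finset X) (φ : X → X), Set.BijOn φ (↑A : Set X) (↑B : Set X) →
    (∀ a ∈ A, ∀ b ∈ A, ∀ c ∈ A, (sbtw a b c ↔ sbtw (φ a) (φ b) (φ c))) →
    ∃ g : X → X, Function.Bijective g ∧
      (∀ a b c : X, sbtw a b c → sbtw (g a) (g b) (g c)) ∧
      ∀ a ∈ A, g a = φ a

open FirstOrder Language Cardinal

namespace Stmt18Aux

open FirstOrder.Field FirstOrder.Ring

/-- sentence: ∀ a b ∃ c, a*a + b*b = c*c -/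
noncomputable def sumSqSentence : Language.ring.Sentence :=
  ∀' ∀' ∃' (((&0 * &0) + (&1 * &1)) =' (&2 * &2))

/-- sentence: ∀ a b, a*a + b*b = 0 → a = 0 -/
noncomputable def sumSqZeroSentence : Language.ring.Sentence :=
  ∀' ∀' ((((&0 * &0) + (&1 * &1)) =' 0) ⟹ (&0 =' 0))

/-- sentence: ∀ x ∃ z, z*z = x ∨ z*z + x = 0 -/
noncomputable def sqTotalSentence : Language.ring.Sentence :=
  ∀' ∃' (((&1 * &1) =' &0) ⊔ (((&1 * &1) + &0) =' 0))

theorem realize_sumSq {R : Type*} [Add R] [Mul R] [Neg R] [Zero R] [One R] [CompatibleRing R] :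
    (R ⊨ (sumSqSentence)) ↔ ∀ a b : R, ∃ c, a * a + b * b = c * c := by
  simp [sumSqSentence, Sentence.Realize, Formula.Realize, Fin.snoc]

theorem realize_sumSqZero {R : Type*} [Add R] [Mul R] [Neg R] [Zero R] [One R] [CompatibleRing R] :
    (R ⊨ (sumSqZeroSentence)) ↔ ∀ a b : R, a * a + b * b = 0 → a = 0 := by
  simp [sumSqZeroSentence, Sentence.Realize, Formula.Realize, Fin.snoc]

theorem realize_sqTotal {R : Type*} [Add R] [Mul R] [Neg R] [Zero R] [One R] [CompatibleRing R] :
    (R ⊨ (sqTotalSentence)) ↔ ∀ x : R, ∃ z, z * z = x ∨ z * z + x = 0 := by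
  simp [sqTotalSentence, Sentence.Realize, Formula.Realize, Fin.snoc]

end Stmt18Aux

namespace Stmt18Aux
open FirstOrder.Field FirstOrder.Ring

theorem exists_linearOrderedField (c : Cardinal.{u}) (hc : Cardinal.aleph0 ≤ c) :
    ∃ (F : Type u) (_ : Field F) (_ : LinearOrder F), IsStrictOrderedRing F ∧ Cardinal.mk F = c := by
  letI : CompatibleRing ℝ := compatibleRingOfRing ℝ
  obtain ⟨N, hequiv, hcard⟩ :=
    Language.exists_elementarilyEquivalent_card_eq Language.ring ℝ c hc
      (by
        rw [Ring.card_ring]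
        have h5 : (5 : Cardinal.{0}) ≤ Cardinal.aleph0 := (Cardinal.nat_lt_aleph0 5).le
        calc Cardinal.lift.{u} (5 : Cardinal.{0}) ≤ Cardinal.lift.{u} Cardinal.aleph0 := by
              exact Cardinal.lift_le.2 h5
          _ = Cardinal.lift.{0} Cardinal.aleph0 := by simp
          _ ≤ Cardinal.lift.{0} c := Cardinal.lift_le.2 hc)
  letI : Language.ring.Structure N := N.str
  haveI : Theory.field.Model ℝ := inferInstance
  haveI : Theory.field.Model N := hequiv.theory_model
  letI : Field N := fieldOfModelField N
  letI : CompatibleRing N := compatibleRingOfModelField N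
  have hsumR : ∀ a b : ℝ, ∃ cc, a * a + b * b = cc * cc := fun a b =>
    ⟨Real.sqrt (a * a + b * b), (Real.mul_self_sqrt (add_nonneg (mul_self_nonneg a) (mul_self_nonneg b))).symm⟩
  have hzeroR : ∀ a b : ℝ, a * a + b * b = 0 → a = 0 := fun a b h => by nlinarith
  have htotR : ∀ x : ℝ, ∃ z, z * z = x ∨ z * z + x = 0 := by
    intro x
    rcases le_total 0 x with hx | hx
    · exact ⟨Real.sqrt x, Or.inl (Real.mul_self_sqrt hx)⟩
    · refine ⟨Real.sqrt (-x), Or.inr ?_⟩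
      rw [Real.mul_self_sqrt (by linarith)]; ring
  have hsum : ∀ a b : N, ∃ cc, a * a + b * b = cc * cc :=
    realize_sumSq.1 ((hequiv.realize_sentence sumSqSentence).1 (realize_sumSq.2 hsumR))
  have hzero : ∀ a b : N, a * a + b * b = 0 → a = 0 :=
    realize_sumSqZero.1 ((hequiv.realize_sentence sumSqZeroSentence).1 (realize_sumSqZero.2 hzeroR))
  have htot : ∀ x : N, ∃ z, z * z = x ∨ z * z + x = 0 :=
    realize_sqTotal.1 ((hequiv.realize_sentence sqTotalSentence).1 (realize_sqTotal.2 htotR))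
  letI instLE : LE N := ⟨fun a b => ∃ z : N, a + z * z = b⟩
  have hle : ∀ a b : N, a ≤ b ↔ ∃ z : N, a + z * z = b := fun _ _ => Iff.rfl
  letI instLin : LinearOrder N :=
  { le := (· ≤ ·)
    le_refl := fun a => ⟨0, by ring⟩
    le_trans := by
      rintro a b cc ⟨z, rfl⟩ ⟨w, rfl⟩
      obtain ⟨v, hv⟩ := hsum z w
      exact ⟨v, by rw [← hv]; ring⟩
    le_antisymm := by
      rintro a b ⟨z, rfl⟩ ⟨w, hw⟩
      have hzw : z * z + w * w = 0 := by linear_combination hw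
      have hz : z = 0 := hzero z w hzw
      rw [hz]; ring
    le_total := by
      intro a b
      obtain ⟨z, hz | hz⟩ := htot (b - a)
      · exact Or.inl ⟨z, by rw [add_comm, hz]; ring⟩
      · exact Or.inr ⟨z, by linear_combination hz⟩
    toDecidableLE := Classical.decRel _ }
  haveI instOAM : IsOrderedAddMonoid N :=
  { add_le_add_left := by
      rintro a b ⟨z, rfl⟩ cc
      exact ⟨z, by ring⟩ }
  haveI instZLO : ZeroLEOneClass N := ⟨⟨1, by ring⟩⟩
  haveI instLOF : IsStrictOrderedRing N :=
    IsStrictOrderedRing.of_mul_pos (by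
      rintro a b ⟨⟨z, hz⟩, ha⟩ ⟨⟨w, hw⟩, hb⟩
      have ha0 : a ≠ 0 := by
        rintro rfl
        exact ha ⟨0, by ring⟩
      have hb0 : b ≠ 0 := by
        rintro rfl
        exact hb ⟨0, by ring⟩
      constructor
      · exact ⟨z * w, by rw [← hz, ← hw]; ring⟩
      · rintro ⟨v, hv⟩
        have h1 : (z * w) * (z * w) + v * v = 0 := by
          linear_combination hv + b * hz + (z * z) * hw
        have hzw0 : z * w = 0 := hzero _ v h1
        have hab : a * b = 0 := by
          linear_combination (z * w) * hzw0 - b * hz - (z * z) * hw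
        exact mul_ne_zero ha0 hb0 hab)
  exact ⟨N, inferInstance, instLin, instLOF, hcard⟩

end Stmt18Aux

namespace Stmt18Aux


attribute [local instance] LinearOrder.toCircularOrder

section Wrap

variable {α β : Type*} [LinearOrder α] [LinearOrder β]

theorem sbtw_iff' {a b c : α} :
    sbtw a b c ↔ (a < b ∧ b < c) ∨ (b < c ∧ c < a) ∨ (c < a ∧ a < b) :=
  Iff.rfl

/-- A "wrap" map: strictly monotone on an upward-closed region `R` and on its complement,
with the image of `R` entirely below the image of the complement, preserves the
circular order induced by the linear orders. -/
theorem sbtw_map_wrap (R : α → Prop) (g : α → β)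
    (hup : ∀ x y, R x → x ≤ y → R y)
    (h1 : ∀ x y, R x → R y → x < y → g x < g y)
    (h2 : ∀ x y, ¬R x → ¬R y → x < y → g x < g y)
    (hcross : ∀ x y, R x → ¬R y → g x < g y) :
    ∀ a b c : α, sbtw a b c → sbtw (g a) (g b) (g c) := by
  have aux : ∀ a b c : α, a < b → b < c → sbtw (g a) (g b) (g c) := by
    intro a b c hab hbc
    rw [sbtw_iff']
    by_cases ha : R a <;> by_cases hb : R b <;> by_cases hc : R c
    · exact Or.inl ⟨h1 a b ha hb hab, h1 b c hb hc hbc⟩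
    · exact absurd (hup b c hb hbc.le) hc
    · exact absurd (hup a b ha hab.le) hb
    · exact absurd (hup a b ha hab.le) hb
    · exact Or.inr (Or.inl ⟨h1 b c hb hc hbc, hcross c a hc ha⟩)
    · exact absurd (hup b c hb hbc.le) hc
    · exact Or.inr (Or.inr ⟨hcross c a hc ha, h2 a b ha hb hab⟩)
    · exact Or.inl ⟨h2 a b ha hb hab, h2 b c hb hc hbc⟩
  intro a b c h
  rcases sbtw_iff'.1 h with ⟨h1', h2'⟩ | ⟨h1', h2'⟩ | ⟨h1', h2'⟩
  · exact aux a b c h1' h2'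
  · exact sbtw_cyclic_right (aux b c a h1' h2')
  · exact sbtw_cyclic_left (aux c a b h1' h2')

theorem sbtw_map_strictMono {g : α → β} (hg : StrictMono g) :
    ∀ a b c : α, sbtw a b c → sbtw (g a) (g b) (g c) :=
  sbtw_map_wrap (fun _ => False) g (fun _ _ h _ => h) (fun _ _ h => h.elim)
    (fun _ _ _ _ h => hg h) (fun _ _ h => h.elim)

end Wrap
section Rot

variable {F : Type*} [Field F] [LinearOrder F] [IsStrictOrderedRing F]

/-- A "rotation" of the projective circle `WithTop F` sending `p` to `⊤`. -/
noncomputable def rot (p : F) (x : WithTop F) : WithTop F :=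
  x.recTopCoe (↑(0 : F))
    (fun x => if p < x then ↑(-(x - p)⁻¹) else if x = p then ⊤ else ↑((p - x)⁻¹))

/-- Inverse of `rot`. -/
noncomputable def unrot (p : F) (y : WithTop F) : WithTop F :=
  y.recTopCoe (↑p) (fun y => if y = 0 then ⊤ else ↑(p - y⁻¹))

@[simp] theorem rot_top (p : F) : rot p ⊤ = ((0 : F) : WithTop F) := rfl
theorem unrot_coe (p y : F) : unrot p ↑y = if y = 0 then ⊤ else ↑(p - y⁻¹) := rfl
@[simp] theorem rot_self (p : F) : rot p ↑p = ⊤ := by simp [rot]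
theorem rot_of_lt (p : F) {x : F} (h : p < x) : rot p ↑x = ↑(-(x - p)⁻¹) := by
  simp [rot, h]
theorem rot_of_gt (p : F) {x : F} (h : x < p) : rot p ↑x = ↑((p - x)⁻¹) := by
  simp [rot, not_lt_of_gt h, ne_of_lt h]

theorem unrot_rot (p : F) (x : WithTop F) : unrot p (rot p x) = x := by
  induction x using WithTop.recTopCoe with
  | top =>
    show unrot p ((0 : F) : WithTop F) = ⊤
    rw [unrot_coe]
    simp
  | coe x =>
    rcases lt_trichotomy p x with h | h | h
    · rw [rot_of_lt p h, unrot]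
      have hne : -(x - p)⁻¹ ≠ 0 := by
        simp [sub_ne_zero.2 (ne_of_gt h)]
      simp only [WithTop.recTopCoe_coe, if_neg hne]
      have hx : p - (-(x - p)⁻¹)⁻¹ = x := by rw [inv_neg, inv_inv]; ring
      rw [hx]
    · subst h; simp [unrot]
    · rw [rot_of_gt p h, unrot]
      have hne : (p - x)⁻¹ ≠ 0 := by
        simp [sub_ne_zero.2 (ne_of_gt h)]
      simp only [WithTop.recTopCoe_coe, if_neg hne]
      have hx : p - ((p - x)⁻¹)⁻¹ = x := by rw [inv_inv]; ring
      rw [hx]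

theorem rot_unrot (p : F) (y : WithTop F) : rot p (unrot p y) = y := by
  induction y using WithTop.recTopCoe with
  | top => simp [unrot]
  | coe y =>
    rcases lt_trichotomy y 0 with h | h | h
    · have : unrot p ↑y = ↑(p - y⁻¹) := by simp [unrot, ne_of_lt h]
      rw [this]
      have hp : p < p - y⁻¹ := by
        have : y⁻¹ < 0 := inv_neg''.2 h
        linarith
      rw [rot_of_lt p hp]
      congr 1
      rw [sub_sub_cancel_left, inv_neg, inv_inv, neg_neg]
    · subst h
      show rot p (unrot p ((0 : F) : WithTop F)) = ((0 : F) : WithTop F)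
      rw [unrot_coe]
      simp
    · have : unrot p ↑y = ↑(p - y⁻¹) := by simp [unrot, ne_of_gt h]
      rw [this]
      have hp : p - y⁻¹ < p := by
        have : 0 < y⁻¹ := inv_pos.2 h
        linarith
      rw [rot_of_gt p hp]
      rw [sub_sub_cancel, inv_inv]

theorem rot_bijective (p : F) : Function.Bijective (rot p) :=
  Function.bijective_iff_has_inverse.2 ⟨unrot p, unrot_rot p, rot_unrot p⟩

theorem unrot_bijective (p : F) : Function.Bijective (unrot p) :=
  Function.bijective_iff_has_inverse.2 ⟨rot p, rot_unrot p, unrot_rot p⟩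

theorem rot_sbtw (p : F) :
    ∀ a b c : WithTop F, sbtw a b c → sbtw (rot p a) (rot p b) (rot p c) := by
  refine sbtw_map_wrap (fun z => (p : WithTop F) < z) (rot p)
    (fun x y hx hxy => lt_of_lt_of_le hx hxy) ?_ ?_ ?_
  · -- strict mono on (p, ⊤]
    intro x y hx hy hxy
    induction y using WithTop.recTopCoe with
    | top =>
      induction x using WithTop.recTopCoe with
      | top => exact absurd hxy (lt_irrefl _)
      | coe x =>
        have hpx : p < x := WithTop.coe_lt_coe.1 hx
        rw [rot_of_lt p hpx, rot_top]
        exact WithTop.coe_lt_coe.2 (by simp [inv_pos.2 (sub_pos.2 hpx)])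
    | coe y =>
      induction x using WithTop.recTopCoe with
      | top => exact absurd hxy (not_top_lt)
      | coe x =>
        have hpx : p < x := WithTop.coe_lt_coe.1 hx
        have hpy : p < y := WithTop.coe_lt_coe.1 hy
        have hxy' : x < y := WithTop.coe_lt_coe.1 hxy
        rw [rot_of_lt p hpx, rot_of_lt p hpy]
        refine WithTop.coe_lt_coe.2 ?_
        have h1 : (0:F) < x - p := sub_pos.2 hpx
        have := inv_strictAnti₀ h1 (by linarith : x - p < y - p)
        linarith
  · -- strict mono on [−∞, p]
    intro x y hx hy hxy
    have hx' : x ≤ (p : WithTop F) := not_lt.1 hx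
    have hy' : y ≤ (p : WithTop F) := not_lt.1 hy
    induction y using WithTop.recTopCoe with
    | top => exact absurd hy' (by simp)
    | coe y =>
      induction x using WithTop.recTopCoe with
      | top => exact absurd hxy not_top_lt
      | coe x =>
        have hxy' : x < y := WithTop.coe_lt_coe.1 hxy
        have hyp : y ≤ p := WithTop.coe_le_coe.1 hy'
        have hxp : x < p := lt_of_lt_of_le hxy' hyp
        rcases eq_or_lt_of_le hyp with h | h
        · rw [rot_of_gt p hxp, h, rot_self]
          exact WithTop.coe_lt_top _
        · rw [rot_of_gt p hxp, rot_of_gt p h]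
          refine WithTop.coe_lt_coe.2 ?_
          have h1 : (0:F) < p - y := sub_pos.2 h
          exact inv_strictAnti₀ h1 (by linarith : p - y < p - x)
  · -- cross
    intro x y hx hy
    have hle : rot p x ≤ ((0:F) : WithTop F) := by
      induction x using WithTop.recTopCoe with
      | top => simp
      | coe x =>
        have hpx : p < x := WithTop.coe_lt_coe.1 hx
        rw [rot_of_lt p hpx]
        refine WithTop.coe_le_coe.2 ?_
        simp [le_of_lt (inv_pos.2 (sub_pos.2 hpx))]
    have hgt : ((0:F) : WithTop F) < rot p y := by
      have hy' : y ≤ (p : WithTop F) := not_lt.1 hy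
      induction y using WithTop.recTopCoe with
      | top => exact absurd hy' (by simp)
      | coe y =>
        have hyp : y ≤ p := WithTop.coe_le_coe.1 hy'
        rcases eq_or_lt_of_le hyp with h | h
        · subst h; rw [rot_self]; exact WithTop.coe_lt_top _
        · rw [rot_of_gt p h]
          exact WithTop.coe_lt_coe.2 (inv_pos.2 (sub_pos.2 h))
    exact lt_of_le_of_lt hle hgt

end Rot



section PW

variable {F : Type*} [Field F] [LinearOrder F] [IsStrictOrderedRing F]

/-- the relation for chains of interpolation points -/
def ltlt : F × F → F × F → Prop := fun s t => s.1 < t.1 ∧ s.2 < t.2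

theorem chain_lt_mem {r : List (F × F)} {s q : F × F}
    (h : List.Chain ltlt s r) (hq : q ∈ r) : s.1 < q.1 ∧ s.2 < q.2 := by
  induction r generalizing s with
  | nil => simp at hq
  | cons t r ih =>
    rcases List.chain_cons.1 h with ⟨hst, htr⟩
    rcases List.mem_cons.1 hq with rfl | hq
    · exact hst
    · obtain ⟨h1, h2⟩ := ih htr hq
      exact ⟨hst.1.trans h1, hst.2.trans h2⟩

/-- Piecewise affine map on `[a, ∞)`, sending `a ↦ b` and the interpolation points
in `r` accordingly, with a final translation piece. -/
noncomputable def pwAux : List (F × F) → F → F → F → F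
  | [], a, b, x => x + (b - a)
  | q :: r, a, b, x =>
      if x < q.1 then b + (x - a) * ((q.2 - b) / (q.1 - a)) else pwAux r q.1 q.2 x

theorem pwAux_spec (r : List (F × F)) : ∀ a b : F, List.Chain ltlt (a, b) r →
    (∀ x y, a ≤ x → x < y → pwAux r a b x < pwAux r a b y) ∧
    (∀ x, a ≤ x → b ≤ pwAux r a b x) ∧
    (∀ y, b ≤ y → ∃ x, a ≤ x ∧ pwAux r a b x = y) ∧
    (pwAux r a b a = b) ∧
    (∀ q ∈ r, pwAux r a b q.1 = q.2) := by
  induction r with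
  | nil =>
    intro a b _
    refine ⟨fun x y _ hxy => by simpa [pwAux] using hxy,
      fun x hx => by simp [pwAux]; linarith,
      fun y hy => ⟨y - (b - a), ⟨by linarith, by simp [pwAux]⟩⟩,
      by simp [pwAux], by simp⟩
  | cons q r ih =>
    intro a b hchain
    rcases List.chain_cons.1 hchain with ⟨⟨ha1, hb1⟩, htail⟩
    obtain ⟨ih1, ih2, ih3, ih4, ih5⟩ := ih q.1 q.2 htail
    have hden : (0 : F) < q.1 - a := sub_pos.2 ha1
    have hs : (0 : F) < (q.2 - b) / (q.1 - a) := div_pos (sub_pos.2 hb1) hden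
    set s : F := (q.2 - b) / (q.1 - a) with hs_def
    have hAq : b + (q.1 - a) * s = q.2 := by
      rw [hs_def, mul_div_assoc', mul_comm, mul_div_assoc, div_self (ne_of_gt hden)]
      ring
    have hAmono : ∀ x y, x < y → b + (x - a) * s < b + (y - a) * s := by
      intro x y hxy
      have := mul_lt_mul_of_pos_right (show x - a < y - a by linarith) hs
      linarith
    have hAlt : ∀ x, x < q.1 → b + (x - a) * s < q.2 := by
      intro x hx
      calc b + (x - a) * s < b + (q.1 - a) * s := hAmono _ _ hx
        _ = q.2 := hAq
    have hAge : ∀ x, a ≤ x → b ≤ b + (x - a) * s := by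
      intro x hx
      nlinarith
    -- values of the function
    have hlow : ∀ x, x < q.1 → pwAux (q :: r) a b x = b + (x - a) * s := by
      intro x hx; simp [pwAux, if_pos hx, hs_def]
    have hhigh : ∀ x, ¬(x < q.1) → pwAux (q :: r) a b x = pwAux r q.1 q.2 x := by
      intro x hx; simp [pwAux, if_neg hx]
    refine ⟨?_, ?_, ?_, ?_, ?_⟩
    · -- strict mono
      intro x y hx hxy
      by_cases hxq : x < q.1 <;> by_cases hyq : y < q.1
      · rw [hlow x hxq, hlow y hyq]; exact hAmono _ _ hxy
      · rw [hlow x hxq, hhigh y hyq]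
        exact lt_of_lt_of_le (hAlt x hxq) (ih2 y (not_lt.1 hyq))
      · exact absurd hxy (asymm (hyq.trans_le (not_lt.1 hxq)))
      · rw [hhigh x hxq, hhigh y hyq]
        exact ih1 x y (not_lt.1 hxq) hxy
    · -- lower bound
      intro x hx
      by_cases hxq : x < q.1
      · rw [hlow x hxq]; exact hAge x hx
      · rw [hhigh x hxq]
        exact hb1.le.trans (ih2 x (not_lt.1 hxq))
    · -- surjectivity onto [b, ∞)
      intro y hy
      by_cases hyq : y < q.2
      · refine ⟨a + (y - b) / s, by nlinarith [div_nonneg (sub_nonneg.2 hy) hs.le], ?_⟩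
        have hxq : a + (y - b) / s < q.1 := by
          have h1 : (y - b) / s < q.1 - a := by
            rw [div_lt_iff₀ hs, hs_def]
            rw [mul_div_assoc', mul_comm, mul_div_assoc, div_self (ne_of_gt hden)]
            nlinarith
          linarith
        rw [hlow _ hxq]
        have harw : a + (y - b) / s - a = (y - b) / s := by ring
        rw [harw, div_mul_cancel₀ _ (ne_of_gt hs)]
        ring
      · obtain ⟨x, hx1, hx2⟩ := ih3 y (not_lt.1 hyq)
        refine ⟨x, ha1.le.trans hx1, ?_⟩
        rw [hhigh x (not_lt.2 hx1), hx2]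
    · -- value at a
      rw [hlow a ha1]; ring
    · -- values at interpolation points
      intro q' hq'
      rcases List.mem_cons.1 hq' with rfl | hq'
      · rw [hhigh q'.1 (lt_irrefl _), ih4]
      · have h1 : q.1 < q'.1 := (chain_lt_mem htail hq').1
        rw [hhigh q'.1 (not_lt.2 h1.le), ih5 q' hq']

/-- Global piecewise affine map. -/
noncomputable def pwFun : List (F × F) → F → F
  | [] => id
  | q :: r => fun x => if x < q.1 then x + (q.2 - q.1) else pwAux r q.1 q.2 x

theorem pwFun_spec (l : List (F × F)) (hl : l.Chain' ltlt) :
    StrictMono (pwFun l) ∧ Function.Surjective (pwFun l) ∧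
      ∀ q ∈ l, pwFun l q.1 = q.2 := by
  cases l with
  | nil =>
    exact ⟨strictMono_id, Function.surjective_id, by simp⟩
  | cons q r =>
    have hchain : List.Chain ltlt q r := hl
    obtain ⟨ih1, ih2, ih3, ih4, ih5⟩ := pwAux_spec r q.1 q.2 hchain
    have hlow : ∀ x, x < q.1 → pwFun (q :: r) x = x + (q.2 - q.1) := by
      intro x hx; simp [pwFun, if_pos hx]
    have hhigh : ∀ x, ¬(x < q.1) → pwFun (q :: r) x = pwAux r q.1 q.2 x := by
      intro x hx; simp [pwFun, if_neg hx]
    refine ⟨?_, ?_, ?_⟩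
    · intro x y hxy
      by_cases hxq : x < q.1 <;> by_cases hyq : y < q.1
      · rw [hlow x hxq, hlow y hyq]; linarith
      · rw [hlow x hxq, hhigh y hyq]
        have h1 : x + (q.2 - q.1) < q.2 := by linarith
        exact lt_of_lt_of_le h1 (ih2 y (not_lt.1 hyq))
      · exact absurd hxy (asymm (hyq.trans_le (not_lt.1 hxq)))
      · rw [hhigh x hxq, hhigh y hyq]
        exact ih1 x y (not_lt.1 hxq) hxy
    · intro y
      by_cases hyq : y < q.2
      · refine ⟨y - (q.2 - q.1), ?_⟩
        have hx : y - (q.2 - q.1) < q.1 := by linarith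
        rw [hlow _ hx]; ring
      · obtain ⟨x, hx1, hx2⟩ := ih3 y (not_lt.1 hyq)
        exact ⟨x, by rw [hhigh x (not_lt.2 hx1), hx2]⟩
    · intro q' hq'
      rcases List.mem_cons.1 hq' with rfl | hq'
      · rw [hhigh q'.1 (lt_irrefl _), ih4]
      · have h1 : q.1 < q'.1 := (chain_lt_mem hchain hq').1
        rw [hhigh q'.1 (not_lt.2 h1.le), ih5 q' hq']

end PW




attribute [local instance] LinearOrder.toCircularOrder

section Helpers

variable {α : Type*} [LinearOrder α]

theorem sbtw_iff'' {a b c : α} :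
    sbtw a b c ↔ (a < b ∧ b < c) ∨ (b < c ∧ c < a) ∨ (c < a ∧ a < b) :=
  Iff.rfl

theorem sbtw_distinct {a b c : α} (h : sbtw a b c) : a ≠ b ∧ b ≠ c ∧ a ≠ c := by
  rw [sbtw_iff''] at h
  refine ⟨?_, ?_, ?_⟩ <;> rintro rfl <;>
    rcases h with ⟨h1, h2⟩ | ⟨h1, h2⟩ | ⟨h1, h2⟩ <;>
    first
      | exact absurd h1 (lt_irrefl _)
      | exact absurd h2 (lt_irrefl _)
      | exact absurd (h1.trans h2) (lt_irrefl _)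

theorem sbtw_or {u v w : α} (huv : u ≠ v) (hvw : v ≠ w) (huw : u ≠ w) :
    sbtw u v w ∨ sbtw u w v := by
  rw [sbtw_iff'', sbtw_iff'']
  rcases huv.lt_or_gt with h1 | h1 <;> rcases hvw.lt_or_gt with h2 | h2 <;>
    rcases huw.lt_or_gt with h3 | h3
  · exact Or.inl (Or.inl ⟨h1, h2⟩)
  · exact absurd (h1.trans h2) (asymm h3)
  · exact Or.inr (Or.inl ⟨h3, h2⟩)
  · exact Or.inl (Or.inr (Or.inr ⟨h3, h1⟩))
  · exact Or.inr (Or.inr (Or.inr ⟨h1, h3⟩))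
  · exact Or.inl (Or.inr (Or.inl ⟨h2, h3⟩))
  · exact absurd (h2.trans h1) (asymm h3)
  · exact Or.inr (Or.inr (Or.inl ⟨h2, h1⟩))

theorem sbtw_inverse {ρ σ : α → α} (hi1 : ∀ z, ρ (σ z) = z) (hi2 : ∀ z, σ (ρ z) = z)
    (hρ : ∀ a b c : α, sbtw a b c → sbtw (ρ a) (ρ b) (ρ c)) :
    ∀ a b c : α, sbtw a b c → sbtw (σ a) (σ b) (σ c) := by
  intro a b c h
  obtain ⟨h1, h2, h3⟩ := sbtw_distinct h
  have hσinj : Function.Injective σ := Function.LeftInverse.injective hi1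
  rcases sbtw_or (fun e => h1 (hσinj e)) (fun e => h2 (hσinj e)) (fun e => h3 (hσinj e))
    with h' | h'
  · exact h'
  · have := hρ _ _ _ h'
    rw [hi1, hi1, hi1] at this
    -- this : sbtw a c b, contradiction with h : sbtw a b c
    exact absurd (sbtw_cyclic_left this) (sbtw_asymm h)

end Helpers


section MainAsm

variable {F : Type u} [Field F] [LinearOrder F] [IsStrictOrderedRing F]

theorem exists_rot (x : WithTop F) :
    ∃ ρ σ : WithTop F → WithTop F,
      (∀ z, σ (ρ z) = z) ∧ (∀ z, ρ (σ z) = z) ∧ ρ x = ⊤ ∧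
      (∀ a b c : WithTop F, sbtw a b c → sbtw (ρ a) (ρ b) (ρ c)) ∧
      (∀ a b c : WithTop F, sbtw a b c → sbtw (σ a) (σ b) (σ c)) := by
  induction x using WithTop.recTopCoe with
  | top => exact ⟨id, id, fun _ => rfl, fun _ => rfl, rfl, fun _ _ _ h => h, fun _ _ _ h => h⟩
  | coe p =>
    exact ⟨rot p, unrot p, unrot_rot p, rot_unrot p, rot_self p, rot_sbtw p,
      sbtw_inverse (rot_unrot p) (unrot_rot p) (rot_sbtw p)⟩

theorem withTopMap_surjective {h₀ : F → F} (h : Function.Surjective h₀) :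
    Function.Surjective (WithTop.map h₀) := by
  intro y
  induction y using WithTop.recTopCoe with
  | top => exact ⟨⊤, rfl⟩
  | coe y =>
    obtain ⟨x, rfl⟩ := h y
    exact ⟨x, rfl⟩

theorem circ_ultrahom :
    @CircUltrahomogeneous (WithTop F) (LinearOrder.toCircularOrder (WithTop F)) := by
  intro A B φ hbij hφ
  rcases A.eq_empty_or_nonempty with rfl | ⟨astar, hastar⟩
  · exact ⟨id, Function.bijective_id, fun _ _ _ h => h, by simp⟩
  obtain ⟨ρ₁, σ₁, hσρ₁, hρσ₁, hρ₁top, hρ₁s, hσ₁s⟩ := exists_rot astar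
  obtain ⟨ρ₂, σ₂, hσρ₂, hρσ₂, hρ₂top, hρ₂s, hσ₂s⟩ := exists_rot (φ astar)
  set ψ : WithTop F → WithTop F := fun x => ρ₂ (φ (σ₁ x)) with hψdef
  set A' : Finset (WithTop F) := A.image ρ₁ with hA'def
  have hmemA' : ∀ x ∈ A', ∃ a ∈ A, ρ₁ a = x := by
    intro x hx
    exact Finset.mem_image.1 hx
  have htopA' : (⊤ : WithTop F) ∈ A' := Finset.mem_image.2 ⟨astar, hastar, hρ₁top⟩
  have hψρ : ∀ a : WithTop F, ψ (ρ₁ a) = ρ₂ (φ a) := by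
    intro a
    rw [hψdef]
    simp only
    rw [hσρ₁]
  have hψtop : ψ ⊤ = ⊤ := by
    have h' : ψ (ρ₁ astar) = ⊤ := by rw [hψρ, hρ₂top]
    rwa [hρ₁top] at h'
  have hψiff : ∀ x ∈ A', ∀ y ∈ A', ∀ z ∈ A',
      (sbtw x y z ↔ sbtw (ψ x) (ψ y) (ψ z)) := by
    intro x hx y hy z hz
    obtain ⟨a, ha, rfl⟩ := hmemA' x hx
    obtain ⟨b, hb, rfl⟩ := hmemA' y hy
    obtain ⟨c, hc, rfl⟩ := hmemA' z hz
    rw [hψρ, hψρ, hψρ]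
    constructor
    · intro h
      have h' : sbtw a b c := by
        have := hσ₁s _ _ _ h
        rwa [hσρ₁, hσρ₁, hσρ₁] at this
      exact hρ₂s _ _ _ ((hφ a ha b hb c hc).1 h')
    · intro h
      have := hσ₂s _ _ _ h
      rw [hσρ₂, hσρ₂, hσρ₂] at this
      exact hρ₁s _ _ _ ((hφ a ha b hb c hc).2 this)
  have hψinj : ∀ x ∈ A', ∀ y ∈ A', ψ x = ψ y → x = y := by
    intro x hx y hy h
    obtain ⟨a, ha, rfl⟩ := hmemA' x hx
    obtain ⟨b, hb, rfl⟩ := hmemA' y hy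
    rw [hψρ, hψρ] at h
    have h2 : φ a = φ b := by
      have := congrArg σ₂ h
      rwa [hσρ₂, hσρ₂] at this
    rw [hbij.injOn (Finset.mem_coe.2 ha) (Finset.mem_coe.2 hb) h2]
  have hψne : ∀ x ∈ A', x ≠ ⊤ → ψ x ≠ ⊤ := fun x hx hxt h =>
    hxt (hψinj x hx ⊤ htopA' (h.trans hψtop.symm))
  have hψmono : ∀ x ∈ A', ∀ y ∈ A', x ≠ ⊤ → y ≠ ⊤ → x < y → ψ x < ψ y := by
    intro x hx y hy hxt hyt hxy
    have hst : sbtw x y (⊤ : WithTop F) := Or.inl ⟨hxy, lt_top_iff_ne_top.2 hyt⟩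
    have h2 := (hψiff x hx y hy ⊤ htopA').1 hst
    rw [hψtop] at h2
    rcases h2 with ⟨h1, _⟩ | ⟨_, h2'⟩ | ⟨h1, _⟩
    · exact h1
    · exact absurd h2' not_top_lt
    · exact absurd h1 not_top_lt
  -- the finite interpolation data
  set S : Finset (WithTop F) := A'.erase ⊤ with hSdef
  set L : List (WithTop F) := S.sort (· ≤ ·) with hLdef
  have hLmem : ∀ x ∈ L, x ∈ A' ∧ x ≠ ⊤ := by
    intro x hx
    have hx' : x ∈ S := (Finset.mem_sort _).1 hx
    exact ⟨Finset.mem_of_mem_erase hx', Finset.ne_of_mem_erase hx'⟩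
  set pl : List (F × F) := L.map (fun x => (x.untopD 0, (ψ x).untopD 0)) with hpldef
  have hplchain : pl.Chain' ltlt := by
    apply List.Pairwise.isChain
    rw [hpldef, List.pairwise_map]
    have hLp : L.Pairwise (· < ·) := (Finset.sortedLT_sort S).pairwise
    refine hLp.imp_of_mem ?_
    intro x y hxL hyL hxy
    obtain ⟨hxA, hxt⟩ := hLmem x hxL
    obtain ⟨hyA, hyt⟩ := hLmem y hyL
    have hψxy : ψ x < ψ y := hψmono x hxA y hyA hxt hyt hxy
    have hψxt : ψ x ≠ ⊤ := hψne x hxA hxt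
    have hψyt : ψ y ≠ ⊤ := hψne y hyA hyt
    obtain ⟨x', rfl⟩ := WithTop.ne_top_iff_exists.1 hxt
    obtain ⟨y', rfl⟩ := WithTop.ne_top_iff_exists.1 hyt
    obtain ⟨u, hu⟩ := WithTop.ne_top_iff_exists.1 hψxt
    obtain ⟨v, hv⟩ := WithTop.ne_top_iff_exists.1 hψyt
    constructor
    · simpa [WithTop.untopD_coe] using WithTop.coe_lt_coe.1 hxy
    · rw [← hu, ← hv]
      simpa [WithTop.untopD_coe] using WithTop.coe_lt_coe.1 (by rwa [hu, hv])
  obtain ⟨hmono, hsurj, hmaps⟩ := pwFun_spec pl hplchain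
  set h₀ : F → F := pwFun pl with hh₀def
  set h : WithTop F → WithTop F := WithTop.map h₀ with hhdef
  have hh_mono : StrictMono h := hmono.withTop_map
  refine ⟨σ₂ ∘ h ∘ ρ₁, ?_, ?_, ?_⟩
  · have b1 : Function.Bijective ρ₁ :=
      Function.bijective_iff_has_inverse.2 ⟨σ₁, hσρ₁, hρσ₁⟩
    have b2 : Function.Bijective σ₂ :=
      Function.bijective_iff_has_inverse.2 ⟨ρ₂, hρσ₂, hσρ₂⟩
    have bh : Function.Bijective h := ⟨hh_mono.injective, withTopMap_surjective hsurj⟩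
    exact (b2.comp bh).comp b1
  · intro a b c hs
    exact hσ₂s _ _ _ (sbtw_map_strictMono hh_mono _ _ _ (hρ₁s _ _ _ hs))
  · intro a ha
    by_cases hat : ρ₁ a = ⊤
    · have ha' : a = astar := by
        have := congrArg σ₁ (hat.trans hρ₁top.symm)
        rwa [hσρ₁, hσρ₁] at this
      subst ha'
      show σ₂ (h (ρ₁ a)) = φ a
      rw [hat, hhdef]
      show σ₂ (WithTop.map h₀ ⊤) = φ a
      rw [WithTop.map_top, ← hρ₂top, hσρ₂]
    · have hmemA : ρ₁ a ∈ A' := Finset.mem_image_of_mem _ ha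
      have hmemS : ρ₁ a ∈ S := Finset.mem_erase.2 ⟨hat, hmemA⟩
      have hmemL : ρ₁ a ∈ L := (Finset.mem_sort _).2 hmemS
      have hq : ((ρ₁ a).untopD 0, (ψ (ρ₁ a)).untopD 0) ∈ pl := by
        rw [hpldef]
        exact List.mem_map_of_mem hmemL
      have h1 : h₀ ((ρ₁ a).untopD 0) = (ψ (ρ₁ a)).untopD 0 := hmaps _ hq
      have hψat : ψ (ρ₁ a) ≠ ⊤ := hψne _ hmemA hat
      obtain ⟨v, hv⟩ := WithTop.ne_top_iff_exists.1 hat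
      obtain ⟨w, hw⟩ := WithTop.ne_top_iff_exists.1 hψat
      have hval : h (ρ₁ a) = ψ (ρ₁ a) := by
        rw [← hw, ← hv] at h1 ⊢
        rw [WithTop.untopD_coe, WithTop.untopD_coe] at h1
        rw [hhdef]
        show WithTop.map h₀ ↑v = _
        rw [WithTop.map_coe, h1]
      show σ₂ (h (ρ₁ a)) = φ a
      rw [hval, hψρ, hσρ₂]

end MainAsm

end Stmt18Aux


/-- For every infinite cardinal `τ` there exists an ultrahomogeneous circularly ordered
set of cardinality `τ`. -/
theorem stmt18 (c : Cardinal.{u}) (hc : Cardinal.aleph0 ≤ c) :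
    ∃ (X : Type u) (inst : CircularOrder X),
      Cardinal.mk X = c ∧ @CircUltrahomogeneous X inst := by
  obtain ⟨F, instF, instL, instS, hF⟩ := Stmt18Aux.exists_linearOrderedField c hc
  refine ⟨WithTop F, LinearOrder.toCircularOrder (WithTop F), ?_, Stmt18Aux.circ_ultrahom⟩
  have h1 : Cardinal.mk (WithTop F) = Cardinal.mk F + 1 := Cardinal.mk_option
  rw [h1, hF]
  exact Cardinal.add_one_eq hc
end
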